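/- arXiv:math/0610286 — 13 statements merged into one kernel-verified Lean document; each statement's English description precedes it below -/
import Mathlib

section
/- For every integer n ≥ 2, the number v_n is divisible by (2n-3)^2. -/
/-!
In `∏_{j=0}^{d} ((d - j) + j x)` with `d = 2n - 3`, the factor `j = 0` is the constant `d` and the
factor `j = d` is `d x`. So the product, and with it every coefficient of `(1 - x)` times it, is
divisible by `d²`.
-/

open Polynomial Finset

noncomputable def v (n : ℕ) : ℤ :=
  if n = 0 then -1 else
  ((1 - X) * ∏ j ∈ Finset.range (2 * n - 2),
      (C ((2 * n : ℤ) - 3 - (j : ℤ)) + C (j : ℤ) * X)).coeff (n - 1)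

theorem C_sq_dvd_prod_range_sub_add_mul_X {R : Type*} [CommRing R] (d : ℕ) :
    C ((d : R) ^ 2) ∣ ∏ j ∈ range (d + 1), (C ((d : R) - j) + C (j : R) * X) := by
  rcases Nat.eq_zero_or_pos d with rfl | hd
  · simp
  have h_first : C (d : R) ∣ ∏ j ∈ range d, (C ((d : R) - j) + C (j : R) * X) :=
    (by simp : C (d : R) ∣ C ((d : R) - (0 : ℕ)) + C ((0 : ℕ) : R) * X).trans
      (dvd_prod_of_mem _ (mem_range.2 hd))
  have h_last : C ((d : R) - d) + C (d : R) * X = C (d : R) * X := by simp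
  rw [prod_range_succ, h_last, C_pow, sq]
  exact mul_dvd_mul h_first (dvd_mul_right _ _)

theorem v_div_sq (n : ℕ) (hn : 2 ≤ n) :
    (2 * (n : ℤ) - 3) ^ 2 ∣ v n := by
  have h_range : 2 * n - 2 = (2 * n - 3) + 1 := by omega
  have h_cast : ((2 * n - 3 : ℕ) : ℤ) = 2 * (n : ℤ) - 3 := by omega
  rw [v, if_neg (by omega), h_range, ← h_cast]
  exact (C_dvd_iff_dvd_coeff _ _).1
    (dvd_mul_of_dvd_right (C_sq_dvd_prod_range_sub_add_mul_X _) _) _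
end

section
/- For every integer n ≥ 2, the number v_n is divisible by (2n-3)^3. More precisely, writing v_n = (2n-3)^2·w_n with w_n the coefficient of x^{n-2} in (1-x)·∏_{j=1}^{2n-4}(2n-3-j+jx), one has w_n ≡ -(2n-3)!·C_{n-2} (mod 2n-3), where C_m = (1/(m+1))·binom(2m,m) is the m-th Catalan number. -/
open Polynomial Finset

lemma key_dvd (k : ℕ) : (2 * k + 1) ∣ (2 * k).factorial * Nat.choose (2 * k + 1) k := by
  rcases Nat.eq_zero_or_pos k with rfl | hk
  · simp
  have h1 : (2 * k + 1) * Nat.choose (2 * k) k = Nat.choose (2 * k + 1) (k + 1) * (k + 1) :=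
    Nat.add_one_mul_choose_eq (2 * k) k
  have h2 : Nat.choose (2 * k + 1) (k + 1) = Nat.choose (2 * k + 1) k := by
    have := Nat.choose_symm (show k + 1 ≤ 2 * k + 1 by omega)
    rw [show 2 * k + 1 - (k + 1) = k by omega] at this
    exact this.symm
  have h3 : (k + 1) ∣ (2 * k).factorial := Nat.dvd_factorial (by omega) (by omega)
  obtain ⟨t, ht⟩ := h3
  refine ⟨t * Nat.choose (2 * k) k, ?_⟩
  rw [ht]
  calc (k + 1) * t * Nat.choose (2 * k + 1) k
      = t * (Nat.choose (2 * k + 1) (k + 1) * (k + 1)) := by rw [h2]; ring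
    _ = t * ((2 * k + 1) * Nat.choose (2 * k) k) := by rw [h1]
    _ = (2 * k + 1) * (t * Nat.choose (2 * k) k) := by ring

lemma w_dvd (k : ℕ) (w : ℤ)
    (hw : w = ((1 - X) * ∏ j ∈ Finset.range (2 * k),
        (C ((2 * (k:ℤ) + 1) - ((1 + j : ℕ) : ℤ)) + C ((1 + j : ℕ) : ℤ) * X)).coeff k) :
    ((2 * k + 1 : ℕ) : ℤ) ∣ w := by
  rw [← ZMod.intCast_zmod_eq_zero_iff_dvd]
  have hM0 : ((2 * (k:ℤ) + 1 : ℤ) : ZMod (2 * k + 1)) = 0 := by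
    have := ZMod.natCast_self (2 * k + 1)
    push_cast at this ⊢
    exact this
  have hcoeff : ((w : ZMod (2 * k + 1))) = (Polynomial.map (Int.castRingHom (ZMod (2 * k + 1)))
      ((1 - X) * ∏ j ∈ Finset.range (2 * k),
        (C ((2 * (k:ℤ) + 1) - ((1 + j : ℕ) : ℤ)) + C ((1 + j : ℕ) : ℤ) * X))).coeff k := by
    rw [coeff_map, hw]; rfl
  rw [hcoeff, Polynomial.map_mul, Polynomial.map_sub, Polynomial.map_one, Polynomial.map_X,
    Polynomial.map_prod]
  have hmap : ∀ j ∈ Finset.range (2 * k),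
      Polynomial.map (Int.castRingHom (ZMod (2 * k + 1)))
        (C ((2 * (k:ℤ) + 1) - ((1 + j : ℕ) : ℤ)) + C ((1 + j : ℕ) : ℤ) * X)
      = C ((1 + j : ℕ) : ZMod (2 * k + 1)) * (X - 1) := by
    intro j hj
    rw [Polynomial.map_add, Polynomial.map_mul, map_C, map_C, Polynomial.map_X]
    have h1 : ((Int.castRingHom (ZMod (2 * k + 1))) ((2 * (k:ℤ) + 1) - ((1 + j : ℕ) : ℤ)))
        = - ((1 + j : ℕ) : ZMod (2 * k + 1)) := by
      rw [eq_intCast, Int.cast_sub, hM0]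
      push_cast
      ring
    have h2 : (Int.castRingHom (ZMod (2 * k + 1))) ((1 + j : ℕ) : ℤ)
        = ((1 + j : ℕ) : ZMod (2 * k + 1)) := by simp
    rw [h1, h2, map_neg]
    ring
  rw [Finset.prod_congr rfl hmap, Finset.prod_mul_distrib, Finset.prod_const, Finset.card_range,
    ← map_prod]
  have hfact : (∏ j ∈ Finset.range (2 * k), ((1 + j : ℕ) : ZMod (2 * k + 1)))
      = (((2 * k).factorial : ℕ) : ZMod (2 * k + 1)) := by
    rw [← Nat.cast_prod]
    congr 1
    simpa [Nat.add_comm] using Finset.prod_range_add_one_eq_factorial (2 * k)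
  rw [hfact]
  have hX : ((1 : (ZMod (2 * k + 1))[X]) - X) * (C (((2 * k).factorial : ℕ) : ZMod (2 * k + 1)) *
      (X - 1) ^ (2 * k)) = C (((2 * k).factorial : ℕ) : ZMod (2 * k + 1)) *
      (-(X - 1) ^ (2 * k + 1)) := by ring
  rw [hX, coeff_C_mul, coeff_neg]
  have hXC : ((X - 1 : (ZMod (2 * k + 1))[X])) = X + C (-1) := by
    rw [map_neg, map_one, sub_eq_add_neg]
  rw [hXC, coeff_X_add_C_pow]
  have h0 : (((2 * k).factorial * Nat.choose (2 * k + 1) k : ℕ) : ZMod (2 * k + 1)) = 0 := by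
    rw [ZMod.natCast_eq_zero_iff]
    exact key_dvd k
  push_cast at h0 ⊢
  rw [show 2 * k + 1 - k = k + 1 by omega]
  calc (((2 * k).factorial : ZMod (2 * k + 1)) * -((-1) ^ (k + 1) * ((2 * k + 1).choose k)))
      = -((-1) ^ (k + 1)) *
        (((2 * k).factorial : ZMod (2 * k + 1)) * ((2 * k + 1).choose k)) := by ring
    _ = 0 := by rw [h0]; ring

theorem v_div_cube (n : ℕ) (hn : 2 ≤ n)
    (w : ℤ)
    (hw : w = ((1 - X) * ∏ j ∈ Finset.Icc 1 (2 * n - 4),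
        (C ((2 * n : ℤ) - 3 - (j : ℤ)) + C (j : ℤ) * X)).coeff (n - 2)) :
    (2 * (n : ℤ) - 3) ^ 3 ∣ v n ∧
    v n = (2 * (n : ℤ) - 3) ^ 2 * w ∧
    w ≡ -((2 * n - 3).factorial : ℤ) * (catalan (n - 2) : ℤ) [ZMOD (2 * (n : ℤ) - 3)] := by
  obtain ⟨k, rfl⟩ : ∃ k, n = k + 2 := ⟨n - 2, by omega⟩
  have hnum : (2 * ((k + 2 : ℕ) : ℤ) - 3) = ((2 * k + 1 : ℕ) : ℤ) := by push_cast; ring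
  have hfac : ∀ j : ℕ, (C (2 * ((k + 2 : ℕ) : ℤ) - 3 - (j : ℤ)) : ℤ[X])
      = C (2 * (k : ℤ) + 1 - (j : ℤ)) := by
    intro j; congr 1; push_cast; ring
  -- rewrite w
  have hIcc : Finset.Icc 1 (2 * (k + 2) - 4) = Finset.Ico 1 (2 * k + 1) := by
    rw [show 2 * (k + 2) - 4 = 2 * k by omega, Finset.Ico_add_one_right_eq_Icc]
  have hw' : w = ((1 - X) * ∏ j ∈ Finset.range (2 * k),
      (C ((2 * (k:ℤ) + 1) - ((1 + j : ℕ) : ℤ)) + C ((1 + j : ℕ) : ℤ) * X)).coeff k := by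
    rw [hw, hIcc, Finset.prod_Ico_eq_prod_range]
    simp only [hfac]
    rfl
  have hdvd : ((2 * k + 1 : ℕ) : ℤ) ∣ w := w_dvd k w hw'
  -- compute v
  have hv : v (k + 2) = ((2 * k + 1 : ℕ) : ℤ) ^ 2 * w := by
    rw [v, if_neg (by omega : ¬ k + 2 = 0)]
    have hr : 2 * (k + 2) - 2 = (2 * k + 1) + 1 := by omega
    rw [hr, Finset.prod_range_succ, Finset.prod_range_succ']
    have hf0 : (C (2 * ((k + 2 : ℕ) : ℤ) - 3 - ((0 : ℕ) : ℤ)) + C ((0 : ℕ) : ℤ) * X : ℤ[X])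
        = C ((2 * k + 1 : ℕ) : ℤ) := by
      rw [show (2 * ((k + 2 : ℕ) : ℤ) - 3 - ((0 : ℕ) : ℤ)) = ((2 * k + 1 : ℕ) : ℤ) by
        push_cast; ring]
      simp
    have hftop : (C (2 * ((k + 2 : ℕ) : ℤ) - 3 - ((2 * k + 1 : ℕ) : ℤ))
        + C ((2 * k + 1 : ℕ) : ℤ) * X : ℤ[X]) = C ((2 * k + 1 : ℕ) : ℤ) * X := by
      rw [show (2 * ((k + 2 : ℕ) : ℤ) - 3 - ((2 * k + 1 : ℕ) : ℤ)) = 0 by push_cast; ring]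
      simp
    rw [hf0, hftop]
    have hP : (∏ j ∈ Finset.range (2 * k),
        (C (2 * ((k + 2 : ℕ) : ℤ) - 3 - ((j + 1 : ℕ) : ℤ)) + C ((j + 1 : ℕ) : ℤ) * X))
        = ∏ j ∈ Finset.range (2 * k),
        (C ((2 * (k:ℤ) + 1) - ((1 + j : ℕ) : ℤ)) + C ((1 + j : ℕ) : ℤ) * X) := by
      apply Finset.prod_congr rfl
      intro j hj
      have e1 : (C (2 * ((k + 2 : ℕ) : ℤ) - 3 - ((j + 1 : ℕ) : ℤ)) : ℤ[X])
          = C ((2 * (k:ℤ) + 1) - ((1 + j : ℕ) : ℤ)) := by congr 1; push_cast; ring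
      have e2 : (C ((j + 1 : ℕ) : ℤ) : ℤ[X]) = C ((1 + j : ℕ) : ℤ) := by
        congr 1; push_cast; ring
      rw [e1, e2]
    rw [hP]
    set P : ℤ[X] := ∏ j ∈ Finset.range (2 * k),
        (C ((2 * (k:ℤ) + 1) - ((1 + j : ℕ) : ℤ)) + C ((1 + j : ℕ) : ℤ) * X) with hPdef
    set m : ℤ := ((2 * k + 1 : ℕ) : ℤ) with hm
    have hre : (1 - X) * (P * C m * (C m * X)) = C m * (C m * (X * ((1 - X) * P))) := by ring
    rw [hre, coeff_C_mul, coeff_C_mul, show k + 2 - 1 = k + 1 from rfl, coeff_X_mul, ← hw']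
    ring
  refine ⟨?_, ?_, ?_⟩
  · rw [hnum, hv, pow_succ]
    exact mul_dvd_mul_left _ hdvd
  · rw [hnum]; exact hv
  · rw [show 2 * (k + 2) - 3 = 2 * k + 1 by omega, show k + 2 - 2 = k from rfl, hnum,
      Int.modEq_iff_dvd]
    have hfd : ((2 * k + 1 : ℕ) : ℤ) ∣ ((2 * k + 1).factorial : ℤ) :=
      Int.natCast_dvd_natCast.2 (Nat.dvd_factorial (by omega) le_rfl)
    exact dvd_sub (by rw [neg_mul]; exact dvd_neg.2 (hfd.mul_right _)) hdvd
end

section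
/- For all n ≥ 1, v_n is odd, i.e., v_n ≡ 1 (mod 2). -/
open Polynomial Finset

lemma prod_ite_X (m : ℕ) :
    ∏ j ∈ Finset.range (2 * m), (if Even j then (1 : Polynomial (ZMod 2)) else X) = X ^ m := by
  induction m with
  | zero => simp
  | succ k ih =>
    rw [show 2 * (k + 1) = 2 * k + 1 + 1 by ring, Finset.prod_range_succ,
      Finset.prod_range_succ, ih]
    simp [Nat.even_add_one, pow_succ]

lemma factor_eq (n j : ℕ) :
    C (((2 * n : ℤ) - 3 - (j : ℤ) : ℤ) : ZMod 2) + C (((j : ℤ)) : ZMod 2) * X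
      = (if Even j then (1 : Polynomial (ZMod 2)) else X) := by
  rcases Nat.even_or_odd j with h | h
  · obtain ⟨k, hk⟩ := h
    subst hk
    push_cast
    have : ((k : ZMod 2) + k) = 0 := by
      have : ((2 : ZMod 2)) = 0 := by decide
      rw [show ((k : ZMod 2) + k) = 2 * k by ring, this, zero_mul]
    simp [this, show (2 : ZMod 2) * n = 0 by rw [show ((2:ZMod 2)) = 0 by decide, zero_mul],
      show ((-3 : ZMod 2)) = 1 by decide, if_pos (Even.add_self k)]
  · obtain ⟨k, hk⟩ := h
    subst hk
    push_cast
    rw [if_neg (by simp [Nat.even_add_one, parity_simps])]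
    have h2 : ((2 : ZMod 2)) = 0 := by decide
    have hk2 : ((k : ZMod 2) * 2) = 0 := by rw [h2, mul_zero]
    ring_nf
    rw [hk2, show ((n : ZMod 2) * 2) = 0 by rw [h2, mul_zero],
      show ((-4 : ZMod 2)) = 0 by decide]
    simp

theorem v_odd (n : ℕ) (hn : 1 ≤ n) : v n ≡ 1 [ZMOD 2] := by
  apply (ZMod.intCast_eq_intCast_iff (v n) 1 2).mp
  obtain ⟨m, rfl⟩ : ∃ m, n = m + 1 := ⟨n - 1, by omega⟩
  rw [v, if_neg (by omega)]
  have hcast : ∀ (p : Polynomial ℤ) (k : ℕ),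
      ((p.coeff k : ℤ) : ZMod 2) = (p.map (Int.castRingHom (ZMod 2))).coeff k := by
    intro p k; rw [Polynomial.coeff_map]; rfl
  rw [hcast]
  rw [Polynomial.map_mul, Polynomial.map_sub, Polynomial.map_one, Polynomial.map_X,
    Polynomial.map_prod]
  have hprod : ∀ j ∈ Finset.range (2 * (m + 1) - 2),
      ((C (2 * ((m + 1 : ℕ) : ℤ) - 3 - (j : ℤ)) + C (j : ℤ) * X).map (Int.castRingHom (ZMod 2)))
        = (if Even j then (1 : Polynomial (ZMod 2)) else X) := by
    intro j _
    rw [Polynomial.map_add, Polynomial.map_mul, Polynomial.map_C, Polynomial.map_C,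
      Polynomial.map_X]
    rw [show (((m+1:ℕ):ℤ)) = ((m:ℤ)+1) by push_cast; ring]
    exact factor_eq (m + 1) j
  rw [Finset.prod_congr rfl hprod, show 2 * (m + 1) - 2 = 2 * m by omega, prod_ite_X]
  rw [sub_mul, one_mul, ← pow_succ']
  simp [Polynomial.coeff_X_pow]
end

section
/- For all integers n ≥ 1 and l ≥ 0, v_{ln+1} ≡ v_{ln+2} (mod 2n). -/
open Polynomial Finset

section Aux

variable {R : Type*} [CommRing R]

lemma shift_period (g : ℕ → R) (p : ℕ) (h : ∀ j, g (j + p) = g j) :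
    ∀ k j, g (k * p + j) = g j := by
  intro k
  induction k with
  | zero => simp
  | succ k ih =>
    intro j
    have e : (k + 1) * p + j = (k * p + j) + p := by ring
    rw [e, h, ih]

lemma prod_range_period (g : ℕ → R) (p l : ℕ) (h : ∀ j, g (j + p) = g j) :
    ∏ j ∈ range (l * p), g j = (∏ j ∈ range p, g j) ^ l := by
  induction l with
  | zero => simp
  | succ l ih =>
    have e : (l + 1) * p = l * p + p := by ring
    rw [e, Finset.prod_range_add, ih, pow_succ]
    congr 1
    exact Finset.prod_congr rfl fun j _ => shift_period g p h l j

end Aux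

section Key

variable (n : ℕ)

local notation "R" => ZMod (2 * n)

/-- the basic block with constant `-1` -/
noncomputable def gA (n : ℕ) (j : ℕ) : (ZMod (2 * n))[X] :=
  C ((-1 : ZMod (2 * n)) - (j : ZMod (2 * n))) + C (j : ZMod (2 * n)) * X

/-- the basic block with constant `1` -/
noncomputable def gB (n : ℕ) (j : ℕ) : (ZMod (2 * n))[X] :=
  C ((1 : ZMod (2 * n)) - (j : ZMod (2 * n))) + C (j : ZMod (2 * n)) * X

lemma cast_add_period (j : ℕ) : ((j + 2 * n : ℕ) : R) = (j : R) := by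
  rw [Nat.cast_add, ZMod.natCast_self, add_zero]

lemma gA_period (j : ℕ) : gA n (j + 2 * n) = gA n j := by
  unfold gA; rw [cast_add_period]

lemma gB_period (j : ℕ) : gB n (j + 2 * n) = gB n j := by
  unfold gB; rw [cast_add_period]

lemma key_symm (hn : 1 ≤ n) :
    ∏ j ∈ range (2 * n), gB n j = ∏ j ∈ range (2 * n), gA n j := by
  -- reflect: ∏ gB j = ∏ gB (2n-1-j) = ∏ -(gA (j+1))
  have h1 : ∏ j ∈ range (2 * n), gB n j
      = ∏ j ∈ range (2 * n), gB n (2 * n - 1 - j) :=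
    (Finset.prod_range_reflect (gB n) (2 * n)).symm
  have h2 : ∀ j ∈ range (2 * n), gB n (2 * n - 1 - j) = -(gA n (j + 1)) := by
    intro j hj
    rw [Finset.mem_range] at hj
    have hle : j + 1 ≤ 2 * n := hj
    have hcast : ((2 * n - 1 - j : ℕ) : R) = -1 - (j : R) := by
      have : (2 * n - 1 - j) + (j + 1) = 2 * n := by omega
      have h0 : ((2 * n - 1 - j : ℕ) : R) + ((j : R) + 1)
          = (((2 * n - 1 - j) + (j + 1) : ℕ) : R) := by
        rw [Nat.cast_add, Nat.cast_add, Nat.cast_one]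
      rw [this, ZMod.natCast_self] at h0
      linear_combination h0
    unfold gA gB
    rw [hcast]
    have hj1 : ((j + 1 : ℕ) : R) = (j : R) + 1 := by push_cast; ring
    rw [hj1]
    have e1 : (1 : R) - (-1 - (j : R)) = -(-1 - ((j : R) + 1)) := by ring
    rw [e1, show (-1 : R) - (j : R) = -((j : R) + 1) from by ring, C_neg, C_neg]
    ring
  rw [h1, Finset.prod_congr rfl h2]
  have h3 : ∏ j ∈ range (2 * n), (-(gA n (j + 1))) =
      (-1 : (ZMod (2*n))[X]) ^ (2 * n) * ∏ j ∈ range (2 * n), gA n (j + 1) := by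
    calc ∏ j ∈ range (2 * n), (-(gA n (j + 1)))
        = ∏ j ∈ range (2 * n), ((-1 : (ZMod (2*n))[X]) * gA n (j + 1)) := by
          simp [neg_one_mul]
      _ = (∏ _j ∈ range (2 * n), (-1 : (ZMod (2*n))[X])) * ∏ j ∈ range (2 * n), gA n (j + 1) :=
          Finset.prod_mul_distrib
      _ = (-1 : (ZMod (2*n))[X]) ^ (2 * n) * ∏ j ∈ range (2 * n), gA n (j + 1) := by
          rw [Finset.prod_const, Finset.card_range]
  rw [h3, Even.neg_one_pow ⟨n, by ring⟩, one_mul]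
  -- now ∏_{j<2n} gA (j+1) = ∏_{j<2n} gA j via the wrap-around
  have hs : (∏ j ∈ range (2 * n), gA n (j + 1)) * gA n 0
      = (∏ j ∈ range (2 * n), gA n j) * gA n (2 * n) := by
    rw [← Finset.prod_range_succ' (gA n) (2 * n), Finset.prod_range_succ]
  have hA0 : gA n (2 * n) = gA n 0 := by
    have := gA_period n 0; simpa using this
  rw [hA0] at hs
  have hg0 : gA n 0 = -1 := by
    unfold gA; simp
  rw [hg0, mul_neg_one, mul_neg_one] at hs
  exact neg_injective hs

end Key

theorem v_first_two_rows (n l : ℕ) (hn : 1 ≤ n) :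
    v (l * n + 1) ≡ v (l * n + 2) [ZMOD (2 * n : ℤ)] := by
  have h2n : (2 : ZMod (2 * n)) * ((n : ℕ) : ZMod (2 * n)) = 0 := by
    have h := ZMod.natCast_self (2 * n)
    push_cast at h
    exact h
  rw [show (2 * n : ℤ) = ((2 * n : ℕ) : ℤ) by push_cast; ring,
    ← ZMod.intCast_eq_intCast_iff]
  rw [v, v, if_neg (by omega : ¬ l * n + 1 = 0), if_neg (by omega : ¬ l * n + 2 = 0)]
  have e1 : 2 * (l * n + 1) - 2 = l * (2 * n) := by
    have h : l * (2 * n) = 2 * (l * n) := by ring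
    omega
  have e2 : 2 * (l * n + 2) - 2 = l * (2 * n) + 1 + 1 := by
    have h : l * (2 * n) = 2 * (l * n) := by ring
    omega
  rw [e1, e2]
  simp only [Nat.add_sub_cancel]
  have cast_coeff : ∀ (p : ℤ[X]) (k : ℕ),
      ((p.coeff k : ℤ) : ZMod (2 * n)) = (p.map (Int.castRingHom (ZMod (2 * n)))).coeff k := by
    intro p k; simp [coeff_map]
  rw [cast_coeff, cast_coeff]
  have hcA : ∀ j : ℕ, ((2 * ((l * n + 1 : ℕ) : ℤ) - 3 - (j : ℤ) : ℤ) : ZMod (2 * n))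
      = -1 - (j : ZMod (2 * n)) := by
    intro j; push_cast
    linear_combination (l : ZMod (2 * n)) * h2n
  have hcB : ∀ j : ℕ, ((2 * ((l * n + 2 : ℕ) : ℤ) - 3 - (j : ℤ) : ℤ) : ZMod (2 * n))
      = 1 - (j : ZMod (2 * n)) := by
    intro j; push_cast
    linear_combination (l : ZMod (2 * n)) * h2n
  have hmapA : Polynomial.map (Int.castRingHom (ZMod (2 * n)))
      ((1 - X) * ∏ j ∈ range (l * (2 * n)),
        (C ((2 * ((l * n + 1 : ℕ) : ℤ)) - 3 - (j : ℤ)) + C (j : ℤ) * X))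
      = (1 - X) * ∏ j ∈ range (l * (2 * n)), gA n j := by
    rw [Polynomial.map_mul, Polynomial.map_sub, Polynomial.map_one, Polynomial.map_X,
      Polynomial.map_prod]
    congr 1
    refine Finset.prod_congr rfl fun j _ => ?_
    rw [Polynomial.map_add, Polynomial.map_mul, Polynomial.map_C, Polynomial.map_C,
      Polynomial.map_X]
    unfold gA
    simp only [Int.coe_castRingHom]
    rw [hcA j]
    norm_cast
  have hmapB : Polynomial.map (Int.castRingHom (ZMod (2 * n)))
      ((1 - X) * ∏ j ∈ range (l * (2 * n) + 1 + 1),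
        (C ((2 * ((l * n + 2 : ℕ) : ℤ)) - 3 - (j : ℤ)) + C (j : ℤ) * X))
      = (1 - X) * ∏ j ∈ range (l * (2 * n) + 1 + 1), gB n j := by
    rw [Polynomial.map_mul, Polynomial.map_sub, Polynomial.map_one, Polynomial.map_X,
      Polynomial.map_prod]
    congr 1
    refine Finset.prod_congr rfl fun j _ => ?_
    rw [Polynomial.map_add, Polynomial.map_mul, Polynomial.map_C, Polynomial.map_C,
      Polynomial.map_X]
    unfold gB
    simp only [Int.coe_castRingHom]
    rw [hcB j]
    norm_cast
  rw [hmapA, hmapB]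
  rw [prod_range_period (gA n) (2 * n) l (gA_period n)]
  rw [Finset.prod_range_succ, Finset.prod_range_succ,
    prod_range_period (gB n) (2 * n) l (gB_period n)]
  have hgB0 : gB n (l * (2 * n)) = 1 := by
    unfold gB
    have hc : ((l * (2 * n) : ℕ) : ZMod (2 * n)) = 0 := by
      push_cast; linear_combination (l : ZMod (2 * n)) * h2n
    rw [hc]; simp
  have hgB1 : gB n (l * (2 * n) + 1) = X := by
    unfold gB
    have hc : ((l * (2 * n) + 1 : ℕ) : ZMod (2 * n)) = 1 := by
      push_cast; linear_combination (l : ZMod (2 * n)) * h2n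
    rw [hc]; simp
  rw [hgB0, hgB1, key_symm n hn, show l * n + 2 - 1 = l * n + 1 from by omega]
  rw [show (1 - X) * ((∏ j ∈ range (2 * n), gA n j) ^ l * 1 * X)
      = ((1 - X) * (∏ j ∈ range (2 * n), gA n j) ^ l) * X from by ring,
    Polynomial.coeff_mul_X]
end

section
/- If k is odd and l ≥ 0, then v_{lk+(k+3)/2} ≡ 0 (mod (2l+1)^2·k^{2l+2}). -/
open Polynomial Finset

lemma dvd_coeff_of_C_dvd {M : ℤ} {Q : Polynomial ℤ} (h : C M ∣ Q) (i : ℕ) :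
    M ∣ Q.coeff i := by
  obtain ⟨q, rfl⟩ := h
  exact ⟨q.coeff i, by rw [coeff_C_mul]⟩

theorem v_odd_k_row (k l : ℕ) (hk : Odd k) (hk0 : 0 < k) :
    v (l * k + (k + 3) / 2) ≡ 0 [ZMOD ((2 * (l : ℤ) + 1) ^ 2 * (k : ℤ) ^ (2 * l + 2))] := by
  obtain ⟨a, ha⟩ := hk
  set n : ℕ := l * k + (k + 3) / 2 with hn
  set N : ℕ := (2 * l + 1) * k with hN
  have hNe : N = 2 * (l * k) + k := by rw [hN]; ring
  have hn0 : n ≠ 0 := by omega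
  have hrange : 2 * n - 2 = N + 1 := by omega
  have h3 : 2 * n = N + 3 := by omega
  have hconst : (2 * (n : ℤ)) - 3 = (N : ℤ) := by omega
  rw [Int.modEq_zero_iff_dvd]
  unfold v
  rw [if_neg hn0]
  set f : ℕ → Polynomial ℤ := fun j => C ((2 * (n : ℤ)) - 3 - (j : ℤ)) + C (j : ℤ) * X with hf
  set g : ℕ → Polynomial ℤ := fun i => C ((2 * (l : ℤ) + 1) - (i : ℤ)) + C (i : ℤ) * X with hg
  have hfi : ∀ i : ℕ, f (i * k) = C (k : ℤ) * g i := by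
    intro i
    have h1 : (2 * (n : ℤ)) - 3 - ((i * k : ℕ) : ℤ) = (k : ℤ) * ((2 * (l : ℤ) + 1) - i) := by
      rw [hconst, hN]; push_cast; ring
    have h2 : ((i * k : ℕ) : ℤ) = (k : ℤ) * (i : ℤ) := by push_cast; ring
    simp only [hf]
    rw [h1, h2]
    simp only [hg, map_mul]
    ring
  have hsub : (range (2 * l + 2)).image (· * k) ⊆ range (2 * n - 2) := by
    intro j hj
    simp only [mem_image, mem_range] at hj ⊢
    obtain ⟨i, hi, rfl⟩ := hj
    have : i * k ≤ (2 * l + 1) * k := Nat.mul_le_mul_right k (by omega)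
    omega
  have hdvd1 : (∏ j ∈ (range (2 * l + 2)).image (· * k), f j) ∣
      ∏ j ∈ range (2 * n - 2), f j :=
    Finset.prod_dvd_prod_of_subset _ _ f hsub
  have himg : (∏ j ∈ (range (2 * l + 2)).image (· * k), f j) =
      ∏ i ∈ range (2 * l + 2), f (i * k) := by
    rw [Finset.prod_image]
    intro i _ j _ hij
    exact Nat.eq_of_mul_eq_mul_right hk0 hij
  have hsplit : (∏ i ∈ range (2 * l + 2), f (i * k)) =
      C (k : ℤ) ^ (2 * l + 2) * ∏ i ∈ range (2 * l + 2), g i := by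
    calc (∏ i ∈ range (2 * l + 2), f (i * k))
        = ∏ i ∈ range (2 * l + 2), (C (k : ℤ) * g i) :=
          Finset.prod_congr rfl fun i _ => hfi i
      _ = (∏ _i ∈ range (2 * l + 2), C (k : ℤ)) * ∏ i ∈ range (2 * l + 2), g i :=
          Finset.prod_mul_distrib
      _ = C (k : ℤ) ^ (2 * l + 2) * ∏ i ∈ range (2 * l + 2), g i := by
          rw [Finset.prod_const, card_range]
  have hg0 : g 0 = C (2 * (l : ℤ) + 1) := by simp [hg]
  have hgtop : g (2 * l + 1) = C (2 * (l : ℤ) + 1) * X := by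
    have e1 : (2 * (l : ℤ) + 1) - ((2 * l + 1 : ℕ) : ℤ) = 0 := by push_cast; ring
    have e2 : ((2 * l + 1 : ℕ) : ℤ) = 2 * (l : ℤ) + 1 := by push_cast; ring
    simp only [hg]
    rw [e1, e2]
    simp
  have hdvd2 : C (2 * (l : ℤ) + 1) ^ 2 ∣ ∏ i ∈ range (2 * l + 2), g i := by
    have hpair : ({0, 2 * l + 1} : Finset ℕ) ⊆ range (2 * l + 2) := by
      intro x hx
      simp only [mem_insert, mem_singleton] at hx
      rcases hx with rfl | rfl <;> simp [mem_range]
    have h01 : (∏ i ∈ ({0, 2 * l + 1} : Finset ℕ), g i) ∣ ∏ i ∈ range (2 * l + 2), g i :=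
      Finset.prod_dvd_prod_of_subset _ _ g hpair
    have hpp : (∏ i ∈ ({0, 2 * l + 1} : Finset ℕ), g i) = g 0 * g (2 * l + 1) :=
      Finset.prod_pair (by omega)
    refine dvd_trans ?_ h01
    rw [hpp, hg0, hgtop]
    exact ⟨X, by ring⟩
  have hCM : C ((2 * (l : ℤ) + 1) ^ 2 * (k : ℤ) ^ (2 * l + 2)) ∣
      ∏ j ∈ range (2 * n - 2), f j := by
    refine dvd_trans ?_ hdvd1
    rw [himg, hsplit]
    simp only [map_mul, map_pow]
    calc C (2 * (l : ℤ) + 1) ^ 2 * C (k : ℤ) ^ (2 * l + 2)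
        = C (k : ℤ) ^ (2 * l + 2) * C (2 * (l : ℤ) + 1) ^ 2 := mul_comm _ _
      _ ∣ C (k : ℤ) ^ (2 * l + 2) * ∏ i ∈ range (2 * l + 2), g i :=
          mul_dvd_mul_left _ hdvd2
  exact dvd_coeff_of_C_dvd (hCM.mul_left (1 - X)) (n - 1)
end

section
/- Let p be a prime and c an integer not divisible by p. Then, as polynomials over Z/pZ, ∏_{i=1}^{p-1}(ix - i + c) ≡ -(x + x^2 + ... + x^{p-1}) (mod p). If p divides c, then the product is congruent to -(x-1)^{p-1} (mod p). -/
/-!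
Reduce modulo `p` and put `Y = X - 1`, so that the factors become `i Y + c` with `i` running over
`(ℤ/pℤ)ˣ`. If `c = 0` the product is `(∏ i) Y^(p-1) = -Y^(p-1)` by Wilson's theorem. If `c ≠ 0`,
write `i Y + c = i (Y + c/i)`; as `i` runs over the units so does `-c/i`, hence the product is
`-∏_u (Y - u) = 1 - Y^(p-1)`. Finally `(X - 1)^(p-1) = 1 + X + ⋯ + X^(p-1)` in characteristic `p`,
because `(X - 1)^p = X^p - 1`.
-/

open Polynomial Finset

section UnitsProducts

variable {R : Type*} [CommRing R] [IsDomain R] [Fintype Rˣ]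

theorem prod_units_sub_C (Y : R[X]) : ∏ u : Rˣ, (Y - C (u : R)) = Y ^ Fintype.card Rˣ - 1 := by
  classical
  have h := congrArg (fun q => q.comp Y)
    (Lagrange.nodal_subgroup_eq_X_pow_card_sub_one (⊤ : Subgroup Rˣ))
  simpa [Lagrange.nodal, Subgroup.card_top, Polynomial.prod_comp] using h

theorem prod_units_val : ∏ u : Rˣ, (u : R) = -1 := by
  rw [← Units.coe_prod, FiniteField.prod_univ_units_id_eq_neg_one, Units.val_neg, Units.val_one]

theorem prod_units_C_mul (Y : R[X]) : ∏ u : Rˣ, C (u : R) * Y = -Y ^ Fintype.card Rˣ := by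
  rw [prod_mul_distrib, ← map_prod, prod_units_val, prod_const, card_univ, map_neg, map_one,
    neg_one_mul]

end UnitsProducts

theorem prod_units_C_mul_add_C {K : Type*} [Field K] [Fintype Kˣ] {c : K} (hc : c ≠ 0)
    (Y : K[X]) : ∏ u : Kˣ, (C (u : K) * Y + C c) = 1 - Y ^ Fintype.card Kˣ := by
  set d : Kˣ := Units.mk0 (-c) (neg_ne_zero.mpr hc)
  have hfactor : ∀ u : Kˣ, C (u : K) * Y + C c = C (u : K) * (Y - C ((d / u : Kˣ) : K)) := by
    intro u
    rw [Units.val_div_eq_div_val, Units.val_mk0, mul_sub, ← C_mul, mul_div_cancel₀ _ u.ne_zero,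
      C_neg, sub_neg_eq_add]
  have hperm : ∏ u : Kˣ, (Y - C ((d / u : Kˣ) : K)) = ∏ u : Kˣ, (Y - C (u : K)) :=
    Fintype.prod_equiv (Equiv.divLeft d) _ _ fun _ => rfl
  rw [prod_congr rfl fun u _ => hfactor u, prod_mul_distrib, ← map_prod, prod_units_val, hperm,
    prod_units_sub_C, map_neg, map_one, neg_one_mul, neg_sub]

theorem X_sub_one_pow_pred_eq_geom_sum {R : Type*} [CommRing R] (p : ℕ) [Fact p.Prime]
    [CharP R p] : ((X : R[X]) - 1) ^ (p - 1) = ∑ i ∈ range p, X ^ i := by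
  apply (monic_X_sub_C (1 : R)).isRegular.left
  simp only [C_1]
  rw [← pow_succ', Nat.sub_add_cancel (Fact.out : p.Prime).pos, mul_geom_sum, sub_pow_char,
    one_pow]

theorem ZMod.prod_Icc_one_pred_eq_prod_units {M : Type*} [CommMonoid M] (p : ℕ) [Fact p.Prime]
    (f : ZMod p → M) : ∏ i ∈ Icc 1 (p - 1), f i = ∏ u : (ZMod p)ˣ, f u := by
  have hp := (Fact.out : p.Prime).pos
  have hne : ∀ n ∈ Icc 1 (p - 1), (n : ZMod p) ≠ 0 := fun n hn => by
    rw [mem_Icc] at hn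
    rw [Ne, ZMod.natCast_eq_zero_iff]
    exact Nat.not_dvd_of_pos_of_lt (by omega) (by omega)
  refine prod_bij' (fun n hn => Units.mk0 (n : ZMod p) (hne n hn)) (fun u _ => (u : ZMod p).val)
    (fun _ _ => mem_univ _) (fun u _ => ?_) (fun n hn => ?_) (fun u _ => ?_) (fun _ _ => rfl)
  · have := ZMod.val_lt (u : ZMod p)
    have := (ZMod.val_ne_zero (u : ZMod p)).mpr u.ne_zero
    rw [mem_Icc]
    omega
  · rw [mem_Icc] at hn
    exact ZMod.val_cast_of_lt (by omega)
  · ext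
    simp

theorem prod_linear_mod_p (p : ℕ) (hp : p.Prime) (c : ℤ) :
    ((¬ ((p : ℤ) ∣ c)) →
      (∏ i ∈ Finset.Icc 1 (p - 1),
          (C (i : ℤ) * X - C (i : ℤ) + C c)).map (Int.castRingHom (ZMod p)) =
        -(∑ i ∈ Finset.Icc 1 (p - 1), X ^ i)) ∧
    (((p : ℤ) ∣ c) →
      (∏ i ∈ Finset.Icc 1 (p - 1),
          (C (i : ℤ) * X - C (i : ℤ) + C c)).map (Int.castRingHom (ZMod p)) =
        -(X - 1) ^ (p - 1)) := by
  have := Fact.mk hp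
  have hmap : (∏ i ∈ Icc 1 (p - 1), (C (i : ℤ) * X - C (i : ℤ) + C c)).map
      (Int.castRingHom (ZMod p)) = ∏ u : (ZMod p)ˣ, (C (u : ZMod p) * (X - 1) + C (c : ZMod p)) := by
    rw [Polynomial.map_prod, ← ZMod.prod_Icc_one_pred_eq_prod_units p
      fun a => C a * (X - 1) + C (c : ZMod p)]
    refine prod_congr rfl fun i _ => ?_
    simp [mul_sub]
  rw [hmap]
  refine ⟨fun hc => ?_, fun hc => ?_⟩
  · have hc' : (c : ZMod p) ≠ 0 := (ZMod.intCast_zmod_eq_zero_iff_dvd c p).not.mpr hc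
    rw [prod_units_C_mul_add_C hc', ZMod.card_units, X_sub_one_pow_pred_eq_geom_sum, range_eq_Ico,
      sum_eq_sum_Ico_succ_bot hp.pos, pow_zero, zero_add,
      ← Icc_sub_one_right_eq_Ico_of_not_isMin (by simpa using hp.ne_zero)]
    ring
  · rw [(ZMod.intCast_zmod_eq_zero_iff_dvd c p).mpr hc, map_zero]
    simp only [add_zero]
    rw [prod_units_C_mul, ZMod.card_units]
end

section
/- For every prime p, v_{p+1} ≡ 1 (mod p) and v_{p+2} ≡ 1 (mod p). -/
open Polynomial Finset

/-!
Modulo `p` the factor `2m - 3 - j + j x` of `v_m` is `s + j (x - 1)` with `s = 2m - 3`, and it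
depends on `j` only through `j mod p`. Over a finite field with `q` elements,
`∏_c (s + c W) = s (1 - W ^ (q - 1))`, the homogenised form of `∏_c (X - c) = X ^ q - X`. Hence
for `m = p + 1` (`s = -1`) and `m = p + 2` (`s = 1`, with two extra factors `1` and `x`) the
coefficient `v_m mod p` is that of `x ^ p` in `(1 - x) (1 - (x - 1) ^ (p - 1)) ^ 2`. Frobenius,
`(x - 1) ^ p = x ^ p - 1`, shows that this coefficient is `2 - (-1) ^ (p - 1) = 1`.
-/

namespace ZMod
variable {n : ℕ} [NeZero n] {M : Type*} [CommMonoid M]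

theorem prod_range_natCast (f : ZMod n → M) : ∏ j ∈ range n, f j = ∏ c, f c :=
  prod_nbij' (fun j => j) val (fun _ _ => mem_univ _) (fun c _ => mem_range.mpr c.val_lt)
    (fun _ hj => val_cast_of_lt (mem_range.mp hj)) (fun c _ => natCast_zmod_val c) (fun _ _ => rfl)

theorem prod_range_mul_natCast (f : ZMod n → M) (k : ℕ) :
    ∏ j ∈ range (k * n), f j = (∏ c, f c) ^ k := by
  induction k with
  | zero => simp
  | succ k ih =>
    rw [add_one_mul, prod_range_add, ih, pow_succ, ← prod_range_natCast]
    simp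

end ZMod

theorem intCast_v {R : Type*} [CommRing R] {m : ℕ} (hm : m ≠ 0) :
    (v m : R) = ((1 - X) * ∏ j ∈ range (2 * m - 2),
      (C (2 * m - 3 : R) + (j : R) • (X - 1))).coeff (m - 1) := by
  rw [v, if_neg hm, ← eq_intCast (Int.castRingHom R), ← coeff_map, Polynomial.map_mul,
    Polynomial.map_prod]
  congr 2
  · simp
  · refine prod_congr rfl fun j _ => ?_
    rw [Polynomial.map_add, Polynomial.map_mul, map_C, map_C, map_X, smul_eq_C_mul, eq_intCast,
      eq_intCast, Int.cast_sub, C_sub]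
    push_cast
    ring

namespace FiniteField
variable {K : Type*} [Field K] [Fintype K]

theorem prod_X_sub_C_eq_X_pow_card_sub_X :
    ∏ c : K, (X - C c) = X ^ Fintype.card K - X := by
  have hq : 1 < Fintype.card K := Fintype.one_lt_card
  have h := prod_multiset_X_sub_C_of_monic_of_roots_card_eq
    (monic_X_pow_sub (p := (X : K[X])) (by rw [degree_X]; exact_mod_cast hq))
    (by rw [roots_X_pow_card_sub_X, X_pow_card_sub_X_natDegree_eq _ hq]; rfl)
  rwa [roots_X_pow_card_sub_X] at h

theorem prod_units_X_sub_C [DecidableEq K] :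
    ∏ u : Kˣ, (X - C (u : K)) = X ^ (Fintype.card K - 1) - 1 := by
  refine mul_left_cancel₀ (X_ne_zero (R := K)) ?_
  have h := prod_X_sub_C_eq_X_pow_card_sub_X (K := K)
  rw [Fintype.prod_eq_mul_prod_subtype_ne _ 0, C_0, sub_zero,
    ← Fintype.prod_equiv unitsEquivNeZero (fun u : Kˣ => X - C (u : K)) _ (fun _ => rfl)] at h
  rw [h, mul_sub, mul_one, mul_pow_sub_one Fintype.card_ne_zero]

theorem prod_one_add_C_mul_X :
    ∏ c : K, (1 + C c * X) = 1 - X ^ (Fintype.card K - 1) := by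
  classical
  have hunit (u : Kˣ) : 1 + C (u : K) * X = C (u : K) * (X - C ((-u⁻¹ : Kˣ) : K)) := by
    rw [mul_sub, ← C_mul, Units.val_neg, mul_neg, Units.mul_inv, C_neg, C_1]; ring
  rw [Fintype.prod_eq_mul_prod_subtype_ne _ 0, C_0, zero_mul, add_zero, one_mul,
    ← Fintype.prod_equiv unitsEquivNeZero (fun u : Kˣ => 1 + C (u : K) * X) _ (fun _ => rfl),
    Fintype.prod_congr _ _ hunit, prod_mul_distrib, ← map_prod, ← Units.coe_prod,
    prod_univ_units_id_eq_neg_one, Fintype.prod_equiv ((Equiv.inv Kˣ).trans (Equiv.neg Kˣ))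
      (fun u => X - C ((-u⁻¹ : Kˣ) : K)) (fun u => X - C (u : K)) (fun _ => rfl),
    prod_units_X_sub_C]
  simp

theorem prod_one_add_smul {R : Type*} [CommRing R] [Algebra K R] (W : R) :
    ∏ c : K, (1 + c • W) = 1 - W ^ (Fintype.card K - 1) := by
  simpa [map_prod, Algebra.smul_def] using congrArg (aeval W) (prod_one_add_C_mul_X (K := K))

theorem prod_algebraMap_add_smul {R : Type*} [CommRing R] [Algebra K R] (s : K) (W : R) :
    ∏ c : K, (algebraMap K R s + c • W) =
      algebraMap K R s * (1 - W ^ (Fintype.card K - 1)) := by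
  rcases eq_or_ne s 0 with rfl | hs
  · simpa using Finset.prod_eq_zero (mem_univ 0) (by simp)
  · have hfactor (c : K) :
        algebraMap K R s + (s * c) • W = algebraMap K R s * (1 + c • W) := by
      rw [mul_smul, Algebra.smul_def s, mul_add, mul_one]
    rw [← Fintype.prod_equiv (Equiv.mulLeft₀ s hs) (fun c => algebraMap K R s + (s * c) • W) _
      (fun _ => rfl), Fintype.prod_congr _ _ hfactor, prod_mul_distrib, prod_one_add_smul,
      prod_const, card_univ, ← map_pow, pow_card]

end FiniteField

section Prime
variable {p : ℕ} [Fact p.Prime]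

theorem coeff_one_sub_X_mul_one_sub_X_sub_one_pow_sq :
    ((1 - X) * (1 - (X - 1) ^ (p - 1)) ^ 2 : (ZMod p)[X]).coeff p = 1 := by
  have hp : p.Prime := Fact.out
  set Q : (ZMod p)[X] := (X - 1) ^ (p - 1) with hQ
  have hfrob : (X - 1) * Q = X ^ p - 1 := by
    rw [hQ, mul_pow_sub_one hp.ne_zero, sub_pow_char, one_pow]
  have hexpand : (1 - X) * (1 - Q) ^ 2 = Q + 2 * X ^ p - X - 1 - X ^ p * Q := by
    linear_combination (2 - Q) * hfrob
  have hQ0 : Q.coeff 0 = 1 := by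
    rw [coeff_zero_eq_eval_zero, hQ, eval_pow, eval_sub, eval_X, eval_one, zero_sub,
      ZMod.pow_card_sub_one_eq_one (neg_ne_zero.mpr one_ne_zero)]
  have hQp : Q.coeff p = 0 := by
    refine coeff_eq_zero_of_natDegree_lt ?_
    rw [hQ, natDegree_pow, ← C_1, natDegree_X_sub_C, mul_one]
    exact Nat.sub_lt hp.pos one_pos
  rw [hexpand]
  norm_num [coeff_X, coeff_one, hQ0, hQp, coeff_X_pow_mul', hp.one_lt.ne, hp.ne_zero]

theorem intCast_v_prime_add_one :
    (v (p + 1) : ZMod p) = ((1 - X) * (1 - (X - 1) ^ (p - 1)) ^ 2 : (ZMod p)[X]).coeff p := by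
  have hs : 2 * ((p + 1 : ℕ) : ZMod p) - 3 = -1 := by push_cast; rw [ZMod.natCast_self]; ring
  rw [intCast_v p.add_one_ne_zero, show 2 * (p + 1) - 2 = 2 * p by omega, Nat.add_sub_cancel,
    ZMod.prod_range_mul_natCast (fun c => C (2 * ((p + 1 : ℕ) : ZMod p) - 3) + c • (X - 1)),
    ← algebraMap_eq, FiniteField.prod_algebraMap_add_smul, ZMod.card, hs, algebraMap_eq, C_neg,
    C_1, neg_one_mul, neg_sq]

theorem intCast_v_prime_add_two :
    (v (p + 2) : ZMod p) = ((1 - X) * (1 - (X - 1) ^ (p - 1)) ^ 2 : (ZMod p)[X]).coeff p := by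
  have hs : 2 * ((p + 2 : ℕ) : ZMod p) - 3 = 1 := by push_cast; rw [ZMod.natCast_self]; ring
  rw [intCast_v (by omega : p + 2 ≠ 0), show 2 * (p + 2) - 2 = 2 * p + 1 + 1 by omega,
    prod_range_succ, prod_range_succ,
    ZMod.prod_range_mul_natCast (fun c => C (2 * ((p + 2 : ℕ) : ZMod p) - 3) + c • (X - 1)),
    ← algebraMap_eq, FiniteField.prod_algebraMap_add_smul, ZMod.card, hs, algebraMap_eq, C_1]
  have h0 : ((2 * p : ℕ) : ZMod p) = 0 := by simp
  have h1 : ((2 * p + 1 : ℕ) : ZMod p) = 1 := by simp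
  rw [h0, h1, zero_smul, one_smul, add_zero, add_sub_cancel, one_mul, mul_one, ← mul_assoc,
    show p + 2 - 1 = p + 1 by omega, coeff_mul_X]

end Prime

theorem v_p_add (p : ℕ) (hp : p.Prime) :
    v (p + 1) ≡ 1 [ZMOD (p : ℤ)] ∧ v (p + 2) ≡ 1 [ZMOD (p : ℤ)] := by
  have := Fact.mk hp
  simp only [← ZMod.intCast_eq_intCast_iff, intCast_v_prime_add_one, intCast_v_prime_add_two,
    coeff_one_sub_X_mul_one_sub_X_sub_one_pow_sq, Int.cast_one, and_self]
end

section
/- Let p be a prime and 2 ≤ l ≤ p+1. Then v_{lp+1} ≡ -1 (mod p) and v_{lp+2} ≡ -1 (mod p). -/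
open Polynomial Finset

/-!
Modulo `p`, the factor `(2n - 3 - j) + j X` of the product defining `v n` depends only on `j mod p`,
and a block of `p` consecutive factors multiplies out to `e (1 - (X - 1)^(p-1))`, where `e = 2n - 3`
(both sides have degree `< p` and agree on `ZMod p`). For `n = lp + 1` and `n = lp + 2` we have
`e = ∓1`, so both residues become the coefficient of `X^(lp)` in `(1 - X) (1 - (X - 1)^(p-1))^(2l)`.
Expanding in powers of `X - 1` and reading off each coefficient by Lucas' theorem turns it into
`(-1)^l ∑ₖ (-1)^k C(2l, k) C(⌊(k(p-1)+1)/p⌋, l)`. For `l ≤ p` the floor may be replaced by `k - 1`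
modulo `p`, and `∑ₖ (-1)^k C(2l, k) C(k - 1, l) = (-1)^(l+1)`; for `l = p + 1` only the terms
`k = 2p, 2p + 1, 2p + 2` survive modulo `p`.
-/

/- `(k - 1).choose m` is `0` at `k = 0` (truncated subtraction); with the generalized binomial
`C(-1, m) = (-1)^m` the sum would vanish instead. -/
theorem sum_range_neg_one_pow_mul_choose_mul_choose_pred {R : Type*} [CommRing R] {n m : ℕ}
    (hm : 0 < m) (hmn : m < n) :
    ∑ k ∈ range (n + 1), (-1 : R) ^ k * n.choose k * (k - 1).choose m = (-1) ^ (m + 1) := by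
  -- `F = ∑_{k ≥ 1} (-1)^k C(n, k) (X + 1)^(k-1)`: its coefficient of `X^m` is the sum.
  set F : R[X] := ∑ k ∈ range n, C ((-1) ^ (k + 1) * (n.choose (k + 1) : R)) * (X + 1) ^ k
  have hF : (X + 1) * F = (-X) ^ n - 1 := by
    have h := add_pow (-(X + 1) : R[X]) 1 n
    rw [sum_range_succ', show -(X + 1) + 1 = (-X : R[X]) by ring] at h
    simp only [one_pow, mul_one, pow_zero, Nat.choose_zero_right, Nat.cast_one] at h
    rw [h, add_sub_cancel_right, mul_sum]
    refine sum_congr rfl fun k _ => ?_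
    simp only [map_mul, map_pow, map_neg, map_one, map_natCast, neg_pow (X + 1 : R[X])]
    ring
  have hG : (X + 1) * ∑ i ∈ range n, (-X) ^ i = 1 - (-X : R[X]) ^ n := by
    simpa [add_comm] using mul_neg_geom_sum (-X : R[X]) n
  have hFG : F = -∑ i ∈ range n, (-X : R[X]) ^ i := by
    have h : (X + C 1) * (F + ∑ i ∈ range n, (-X) ^ i) = 0 := by
      rw [map_one, mul_add, hF, hG]; ring
    exact eq_neg_of_add_eq_zero_left ((monic_X_add_C 1).mul_right_eq_zero_iff.mp h)
  have hneg (i : ℕ) : (-X : R[X]) ^ i = C ((-1) ^ i) * X ^ i := by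
    rw [neg_pow, map_pow, map_neg, map_one]
  have h := congrArg (coeff · m) hFG
  simp only [F, finsetSum_coeff, coeff_C_mul, coeff_X_add_one_pow, coeff_neg, hneg] at h
  rw [sum_range_succ', Nat.zero_sub, Nat.choose_eq_zero_of_lt hm]
  simpa [pow_succ, hmn] using h

theorem Nat.mul_add_div_of_lt {a b c : ℕ} (hc : c < b) : (a * b + c) / b = a :=
  Nat.div_eq_of_lt_le (by lia) (by lia)

theorem prod_range_mul_natCast_eq_pow {M : Type*} [CommMonoid M] {p : ℕ} (f : ZMod p → M)
    (m : ℕ) : ∏ j ∈ range (m * p), f j = (∏ j ∈ range p, f j) ^ m := by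
  induction m with
  | zero => simp
  | succ m ih =>
    rw [Nat.succ_mul, prod_range_add, ih, pow_succ]
    congr 1
    refine prod_congr rfl fun j _ => ?_
    push_cast [ZMod.natCast_self]
    ring_nf

theorem v_cast_eq_coeff {R : Type*} [CommRing R] {n : ℕ} (hn : n ≠ 0) {e : R}
    (he : ((2 * n - 3 : ℤ) : R) = e) :
    (v n : R) =
      ((1 - X) * ∏ j ∈ range (2 * n - 2), (C (e - j) + C (j : R) * X)).coeff (n - 1) := by
  rw [v, if_neg hn]
  refine (coeff_map (Int.castRingHom R) _).symm.trans ?_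
  simp only [Polynomial.map_mul, Polynomial.map_sub, Polynomial.map_one, map_X,
    Polynomial.map_prod, Polynomial.map_add, map_C, Int.coe_castRingHom, ← he]
  push_cast
  rfl

section

variable {p : ℕ} [Fact p.Prime]

theorem ZMod.natCast_choose_eq_choose_mod_mul_choose_div (n k : ℕ) :
    (n.choose k : ZMod p) = (n % p).choose (k % p) * (n / p).choose (k / p) := by
  exact_mod_cast
    (ZMod.intCast_eq_intCast_iff _ _ p).2 Choose.choose_modEq_choose_mod_mul_choose_div

theorem ZMod.natCast_choose_mul_add {a b c d : ℕ} (hb : b < p) (hd : d < p) :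
    ((a * p + b).choose (c * p + d) : ZMod p) = a.choose c * b.choose d := by
  rw [ZMod.natCast_choose_eq_choose_mod_mul_choose_div, Nat.mul_add_mod_of_lt hb,
    Nat.mul_add_mod_of_lt hd, Nat.mul_add_div_of_lt hb, Nat.mul_add_div_of_lt hd, mul_comm]

theorem prod_range_C_sub_add_C_mul_X (e : ZMod p) :
    ∏ r ∈ range p, (C (e - r) + C (r : ZMod p) * X) = C e * (1 - (X - 1) ^ (p - 1)) := by
  have hp : 2 ≤ p := (Fact.out : p.Prime).two_le
  rw [← sub_eq_zero]
  refine eq_zero_of_natDegree_lt_card_of_eval_eq_zero _ Function.injective_id (fun a => ?_) ?_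
  · simp only [id, eval_sub, eval_prod, eval_add, eval_mul, eval_C, eval_X, eval_one, eval_pow]
    rcases eq_or_ne a 1 with rfl | ha
    · simp [zero_pow (show p - 1 ≠ 0 by lia), ZMod.pow_card]
    · have hr : (-e / (a - 1)).val ∈ range p := mem_range.2 (ZMod.val_lt _)
      rw [prod_eq_zero hr (by rw [ZMod.natCast_zmod_val]; field_simp [sub_ne_zero.2 ha]; ring),
        ZMod.pow_card_sub_one_eq_one (sub_ne_zero.2 ha)]
      ring
  · rw [ZMod.card]
    refine (natDegree_sub_le _ _).trans_lt (max_lt ?_ ?_)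
    · have hlin (r : ℕ) : (C (e - r) + C (r : ZMod p) * X).natDegree ≤ 1 := by
        rw [add_comm]; exact natDegree_linear_le
      refine (natDegree_prod_le _ _).trans_lt ?_
      rw [show range p = range (p - 1 + 1) by congr; lia, sum_range_succ']
      calc _ ≤ ∑ _r ∈ range (p - 1), 1 + 0 := by gcongr with r; exacts [hlin _, by simp]
        _ < p := by simp; lia
    · refine (natDegree_C_mul_le _ _).trans_lt ?_
      refine (natDegree_sub_le _ _).trans_lt (max_lt (by simp; lia) ?_)
      have hlin : ((X : (ZMod p)[X]) - 1).natDegree ≤ 1 := by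
        rw [← C_1]; exact natDegree_X_sub_C_le _
      exact (natDegree_pow_le_of_le _ hlin).trans_lt (by lia)

theorem prod_range_two_mul_mul_C_sub_add_C_mul_X {e : ZMod p} (he : e ^ 2 = 1) (l : ℕ) :
    ∏ j ∈ range (2 * l * p), (C (e - j) + C (j : ZMod p) * X) =
      (1 - ((X : (ZMod p)[X]) - 1) ^ (p - 1)) ^ (2 * l) := by
  rw [prod_range_mul_natCast_eq_pow (fun a => C (e - a) + C a * X), prod_range_C_sub_add_C_mul_X,
    mul_pow, pow_mul (C e), ← C_pow, he, C_1, one_pow, one_mul]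

theorem coeff_X_sub_one_pow_mul (n l : ℕ) :
    (((X : (ZMod p)[X]) - 1) ^ n).coeff (l * p) = (-1) ^ (n + l) * (n / p).choose l := by
  have hp : 0 < p := (Fact.out : p.Prime).pos
  rw [← C_1, sub_eq_add_neg, ← C_neg, coeff_X_add_C_pow,
    ZMod.natCast_choose_eq_choose_mod_mul_choose_div]
  simp only [Nat.mul_mod_left, Nat.choose_zero_right, Nat.cast_one, one_mul,
    Nat.mul_div_cancel _ hp]
  rcases lt_or_ge n (l * p) with h | h
  · rw [Nat.choose_eq_zero_of_lt ((Nat.div_lt_iff_lt_mul hp).2 h)]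
    simp
  · obtain ⟨m, rfl⟩ := Nat.exists_eq_add_of_le h
    rw [Nat.add_sub_cancel_left, add_right_comm, pow_add _ (l * p + l), pow_add, pow_mul,
      ZMod.pow_card, ← pow_add, ← two_mul, pow_mul, neg_one_sq, one_pow, one_mul]

theorem coeff_one_sub_X_mul_one_sub_X_sub_one_pow (l : ℕ) :
    ((1 - X) * (1 - ((X : (ZMod p)[X]) - 1) ^ (p - 1)) ^ (2 * l)).coeff (l * p) =
      (-1) ^ l * ∑ k ∈ range (2 * l + 1),
        (-1 : ZMod p) ^ k * (2 * l).choose k * ((k * (p - 1) + 1) / p).choose l := by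
  have hsign : (-1 : ZMod p) ^ (p - 1) = 1 := ZMod.pow_card_sub_one_eq_one (by simp)
  have hexp : (1 - X) * (1 - ((X : (ZMod p)[X]) - 1) ^ (p - 1)) ^ (2 * l) =
      ∑ k ∈ range (2 * l + 1),
        C ((-1 : ZMod p) ^ (k + 1) * (2 * l).choose k) * (X - 1) ^ (k * (p - 1) + 1) := by
    rw [sub_eq_neg_add (1 : (ZMod p)[X]) (_ ^ _), add_pow, mul_sum]
    refine sum_congr rfl fun k _ => ?_
    rw [neg_pow, ← pow_mul, one_pow, mul_one, map_mul, map_pow, map_neg, map_one, map_natCast,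
      pow_succ, pow_succ, mul_comm k]
    ring
  rw [hexp, finsetSum_coeff, mul_sum]
  refine sum_congr rfl fun k _ => ?_
  rw [coeff_C_mul, coeff_X_sub_one_pow_mul, pow_add _ (k * (p - 1) + 1), pow_succ _ (k * (p - 1)),
    pow_mul', hsign, one_pow]
  ring

theorem natCast_choose_mul_pred_add_one_div {k l : ℕ} (hl2 : 2 ≤ l) (hlp : l ≤ p)
    (hk : k ≤ 2 * l) : (((k * (p - 1) + 1) / p).choose l : ZMod p) = (k - 1).choose l := by
  have hp : 2 ≤ p := (Fact.out : p.Prime).two_le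
  rcases lt_or_ge k 2 with hk2 | hk2
  · have hq : (k * (p - 1) + 1) / p < l := by
      refine Nat.div_lt_of_lt_mul ?_
      have := Nat.mul_le_mul_right (p - 1) (show k ≤ 1 by lia)
      have := Nat.mul_le_mul_left p hl2
      lia
    rw [Nat.choose_eq_zero_of_lt hq, Nat.choose_eq_zero_of_lt (by lia : k - 1 < l)]
  rcases le_or_gt k (p + 1) with hkp | hkp
  · have h : k * (p - 1) + 1 = (k - 1) * p + (p + 1 - k) := by
      zify [show 1 ≤ p by lia, show 1 ≤ k by lia, hkp]; ring
    rw [h, Nat.mul_add_div_of_lt (by lia)]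
  · have h : k * (p - 1) + 1 = (k - 2) * p + (2 * p + 1 - k) := by
      zify [show 1 ≤ p by lia, show 2 ≤ k by lia, show k ≤ 2 * p + 1 by lia]; ring
    -- Pascal's rule; the correction `C(k - 2, l - 1)` vanishes by Lucas since `k - 2 - p < l - 1`.
    have hvanish : ((k - 2).choose (l - 1) : ZMod p) = 0 := by
      rw [show k - 2 = 1 * p + (k - 2 - p) by lia, show l - 1 = 0 * p + (l - 1) by lia,
        ZMod.natCast_choose_mul_add (by lia) (by lia),
        Nat.choose_eq_zero_of_lt (by lia : k - 2 - p < l - 1)]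
      simp
    rw [h, Nat.mul_add_div_of_lt (by lia), show k - 1 = k - 2 + 1 by lia, show l = l - 1 + 1 by lia,
      Nat.choose_succ_succ', Nat.cast_add, hvanish, zero_add]

theorem sum_neg_one_pow_mul_choose_mul_choose_div_of_le {l : ℕ} (hl2 : 2 ≤ l) (hlp : l ≤ p) :
    ∑ k ∈ range (2 * l + 1),
      (-1 : ZMod p) ^ k * (2 * l).choose k * ((k * (p - 1) + 1) / p).choose l = (-1) ^ (l + 1) := by
  rw [sum_congr rfl fun k hk => by
    rw [natCast_choose_mul_pred_add_one_div hl2 hlp (Nat.lt_succ_iff.1 (mem_range.1 hk))]]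
  exact sum_range_neg_one_pow_mul_choose_mul_choose_pred (by lia) (by lia)

theorem sum_neg_one_pow_mul_choose_mul_choose_div_succ :
    ∑ k ∈ range (2 * (p + 1) + 1),
      (-1 : ZMod p) ^ k * (2 * (p + 1)).choose k * ((k * (p - 1) + 1) / p).choose (p + 1) =
        (-1) ^ (p + 1 + 1) := by
  have hp : 2 ≤ p := (Fact.out : p.Prime).two_le
  rw [show 2 * (p + 1) = 2 * p + 2 by ring]
  have hlow : ∑ k ∈ range (2 * p),
      (-1 : ZMod p) ^ k * (2 * p + 2).choose k * ((k * (p - 1) + 1) / p).choose (p + 1) = 0 := by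
    refine sum_eq_zero fun k hk => ?_
    have hk := mem_range.1 hk
    rcases le_or_gt k (p + 2) with hkp | hkp
    · have hq : (k * (p - 1) + 1) / p < p + 1 := by
        refine Nat.div_lt_of_lt_mul ?_
        have := Nat.mul_le_mul_right (p - 1) hkp
        have : (p + 2) * (p - 1) + 2 = p * (p + 1) := by zify [show 1 ≤ p by lia]; ring
        lia
      rw [Nat.choose_eq_zero_of_lt hq, Nat.cast_zero, mul_zero]
    · rw [show k = 1 * p + (k - p) by lia, ZMod.natCast_choose_mul_add (by lia) (by lia),
        Nat.choose_eq_zero_of_lt (by lia : 2 < k - p)]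
      simp
  have h2p : (((2 * p + 2).choose (2 * p) : ℕ) : ZMod p) = 1 := by
    rw [Nat.choose_symm_add, Nat.choose_two_right, show 2 * p + 2 - 1 = 2 * p + 1 by lia,
      show (2 * p + 2) * (2 * p + 1) = 2 * ((p + 1) * (2 * p + 1)) by ring,
      Nat.mul_div_cancel_left _ two_pos]
    push_cast [ZMod.natCast_self]; ring
  have h2p1 : (((2 * p + 2).choose (2 * p + 1) : ℕ) : ZMod p) = 2 := by
    rw [Nat.choose_succ_self_right]; push_cast [ZMod.natCast_self]; ring
  have hsub {a : ℕ} (ha : 0 < a) (hap : a ≤ p) :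
      (((1 * p + (p - a)).choose (1 * p + 1) : ℕ) : ZMod p) = -a := by
    rw [ZMod.natCast_choose_mul_add (by lia) (by lia), Nat.choose_self, Nat.choose_one_right,
      Nat.cast_sub hap, ZMod.natCast_self]
    simp
  rw [show 2 * p + 2 + 1 = 2 * p + 1 + 1 + 1 by ring, sum_range_succ, sum_range_succ,
    sum_range_succ, hlow, zero_add, h2p, h2p1, show 2 * p + 1 + 1 = 2 * p + 2 by ring,
    Nat.choose_self,
    show 2 * p * (p - 1) + 1 = (2 * p - 2) * p + 1 by
      zify [show 1 ≤ p by lia, show 2 ≤ 2 * p by lia]; ring,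
    show (2 * p + 1) * (p - 1) + 1 = (2 * p - 1) * p + 0 by
      zify [show 1 ≤ p by lia, show 1 ≤ 2 * p by lia]; ring,
    show (2 * p + 2) * (p - 1) + 1 = (2 * p - 1) * p + (p - 1) by
      zify [show 1 ≤ p by lia, show 1 ≤ 2 * p by lia]; ring,
    Nat.mul_add_div_of_lt (show 1 < p by lia), Nat.mul_add_div_of_lt (show 0 < p by lia), Nat.mul_add_div_of_lt (show p - 1 < p by lia),
    show 2 * p - 2 = 1 * p + (p - 2) by lia, show 2 * p - 1 = 1 * p + (p - 1) by lia,
    show p + 1 = 1 * p + 1 by ring, hsub two_pos hp, hsub one_pos (by lia)]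
  simp only [pow_succ, pow_mul, ZMod.pow_card]
  push_cast
  ring

theorem coeff_one_sub_X_mul_one_sub_X_sub_one_pow_eq_neg_one {l : ℕ} (hl2 : 2 ≤ l)
    (hlp : l ≤ p + 1) :
    ((1 - X) * (1 - ((X : (ZMod p)[X]) - 1) ^ (p - 1)) ^ (2 * l)).coeff (l * p) = -1 := by
  have hsum : ∑ k ∈ range (2 * l + 1),
      (-1 : ZMod p) ^ k * (2 * l).choose k * ((k * (p - 1) + 1) / p).choose l = (-1) ^ (l + 1) := by
    rcases hlp.lt_or_eq with hlp | rfl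
    · exact sum_neg_one_pow_mul_choose_mul_choose_div_of_le hl2 (by lia)
    · exact sum_neg_one_pow_mul_choose_mul_choose_div_succ
  rw [coeff_one_sub_X_mul_one_sub_X_sub_one_pow, hsum, ← pow_add]
  exact Odd.neg_one_pow ⟨l, by ring⟩

end

theorem v_lp_add (p l : ℕ) (hp : p.Prime) (hl2 : 2 ≤ l) (hlp : l ≤ p + 1) :
    v (l * p + 1) ≡ -1 [ZMOD (p : ℤ)] ∧ v (l * p + 2) ≡ -1 [ZMOD (p : ℤ)] := by
  have : Fact p.Prime := ⟨hp⟩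
  have hkey := coeff_one_sub_X_mul_one_sub_X_sub_one_pow_eq_neg_one hl2 hlp
  simp only [← ZMod.intCast_eq_intCast_iff, Int.cast_neg, Int.cast_one]
  constructor
  · rw [v_cast_eq_coeff (e := -1) (by lia) (by push_cast [ZMod.natCast_self]; ring),
      show 2 * (l * p + 1) - 2 = 2 * l * p by rw [Nat.mul_add_one, Nat.add_sub_cancel, mul_assoc],
      Nat.add_sub_cancel, prod_range_two_mul_mul_C_sub_add_C_mul_X (by ring), hkey]
  · rw [v_cast_eq_coeff (e := 1) (by lia) (by push_cast [ZMod.natCast_self]; ring),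
      show 2 * (l * p + 2) - 2 = 2 * l * p + 1 + 1 by rw [Nat.mul_add, mul_assoc]; lia,
      show l * p + 2 - 1 = l * p + 1 by lia, prod_range_succ, prod_range_succ,
      prod_range_two_mul_mul_C_sub_add_C_mul_X (by ring)]
    -- the factors with `j = 2lp` and `j = 2lp + 1` are `1` and `X`
    push_cast [ZMod.natCast_self]
    simp only [mul_zero, zero_mul, sub_zero, sub_self, map_one, map_zero, zero_add, add_zero,
      one_mul, mul_one]
    rw [← mul_assoc, coeff_mul_X, hkey]
end

section
/- For all k ≥ 0: v_{1+3k} ≡ v_{2+3k} ≡ C_k (mod 3), where C_k = (1/(k+1))·binom(2k,k) is the k-th Catalan number, and v_{3k} ≡ 0 (mod 3) for k ≥ 1. -/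
open Polynomial Finset

lemma catalan_int (k : ℕ) (hk : 1 ≤ k) :
    (catalan k : ℤ) = ((2*k).choose k : ℤ) - ((2*k).choose (k-1) : ℤ) := by
  have h1 : (k + 1) * catalan k = (2*k).choose k := by
    have := succ_mul_catalan_eq_centralBinom k
    rwa [Nat.centralBinom] at this
  have h2 : (2*k).choose k * k = (2*k).choose (k-1) * (k+1) := by
    have := Nat.choose_succ_right_eq (2*k) (k-1)
    have hkk : k - 1 + 1 = k := by omega
    rw [hkk] at this
    have h3 : 2*k - (k-1) = k+1 := by omega
    rw [h3] at this
    exact this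
  have hne : ((k:ℤ)+1) ≠ 0 := by positivity
  have key : ((k:ℤ)+1) * (catalan k : ℤ)
      = ((k:ℤ)+1) * (((2*k).choose k : ℤ) - ((2*k).choose (k-1) : ℤ)) := by
    have e1 : ((k:ℤ)+1) * (catalan k : ℤ) = ((2*k).choose k : ℤ) := by exact_mod_cast h1
    have e2 : ((2*k).choose k : ℤ) * k = ((2*k).choose (k-1) : ℤ) * ((k:ℤ)+1) := by
      exact_mod_cast h2
    rw [e1]; linear_combination -e2
  exact mul_left_cancel₀ hne key

noncomputable def f1 (j : ℕ) : (ZMod 3)[X] := C ((-1 : ZMod 3) - (j : ZMod 3)) + C (j : ZMod 3) * X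
noncomputable def f2 (j : ℕ) : (ZMod 3)[X] := C ((1 : ZMod 3) - (j : ZMod 3)) + C (j : ZMod 3) * X

lemma f1_add (a i : ℕ) (h : (a : ZMod 3) = 0) : f1 (a + i) = f1 i := by
  simp [f1, Nat.cast_add, h]

lemma f2_add (a i : ℕ) (h : (a : ZMod 3) = 0) : f2 (a + i) = f2 i := by
  simp [f2, Nat.cast_add, h]

lemma f1_val (j : ℕ) (c d : ZMod 3) (h1 : (-1 : ZMod 3) - (j : ZMod 3) = c)
    (h2 : (j : ZMod 3) = d) : f1 j = C c + C d * X := by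
  rw [f1, h1, h2]

lemma f2_val (j : ℕ) (c d : ZMod 3) (h1 : (1 : ZMod 3) - (j : ZMod 3) = c)
    (h2 : (j : ZMod 3) = d) : f2 j = C c + C d * X := by
  rw [f2, h1, h2]

lemma f1_0 : f1 0 = -1 := by rw [f1_val 0 (-1) 0 (by decide) (by decide)]; simp
lemma f1_1 : f1 1 = 1 + X := by rw [f1_val 1 1 1 (by decide) (by decide)]; simp
lemma f1_2 : f1 2 = -X := by rw [f1_val 2 0 (-1) (by decide) (by decide)]; simp
lemma f1_3 : f1 3 = -1 := by rw [f1_val 3 (-1) 0 (by decide) (by decide)]; simp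
lemma f1_4 : f1 4 = 1 + X := by rw [f1_val 4 1 1 (by decide) (by decide)]; simp
lemma f1_5 : f1 5 = -X := by rw [f1_val 5 0 (-1) (by decide) (by decide)]; simp

lemma f2_0 : f2 0 = 1 := by rw [f2_val 0 1 0 (by decide) (by decide)]; simp
lemma f2_1 : f2 1 = X := by rw [f2_val 1 0 1 (by decide) (by decide)]; simp
lemma f2_2 : f2 2 = -(1+X) := by rw [f2_val 2 (-1) (-1) (by decide) (by decide)]; simp; ring
lemma f2_3 : f2 3 = 1 := by rw [f2_val 3 1 0 (by decide) (by decide)]; simp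
lemma f2_4 : f2 4 = X := by rw [f2_val 4 0 1 (by decide) (by decide)]; simp
lemma f2_5 : f2 5 = -(1+X) := by rw [f2_val 5 (-1) (-1) (by decide) (by decide)]; simp; ring
lemma f2_6 : f2 6 = 1 := by rw [f2_val 6 1 0 (by decide) (by decide)]; simp
lemma f2_7 : f2 7 = X := by rw [f2_val 7 0 1 (by decide) (by decide)]; simp

lemma cast6k (k : ℕ) : ((6 * k : ℕ) : ZMod 3) = 0 := by
  have h : (6 * k : ℕ) = 3 * (2 * k) := by ring
  rw [h, Nat.cast_mul, show ((3:ℕ) : ZMod 3) = 0 from by decide, zero_mul]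

lemma prodf1 (k : ℕ) : ∏ j ∈ range (6*k), f1 j = X^(2*k) * (X+1)^(2*k) := by
  induction k with
  | zero => simp
  | succ k ih =>
    rw [show 6 * (k+1) = 6*k + 6 from by ring, Finset.prod_range_add, ih]
    rw [Finset.prod_congr rfl (fun x _ => f1_add (6*k) x (cast6k k))]
    rw [Finset.prod_range_succ, Finset.prod_range_succ, Finset.prod_range_succ,
      Finset.prod_range_succ, Finset.prod_range_succ, Finset.prod_range_one,
      f1_0, f1_1, f1_2, f1_3, f1_4, f1_5]
    ring
  
lemma prodf2 (k : ℕ) : ∏ j ∈ range (6*k+2), f2 j = X^(2*k+1) * (X+1)^(2*k) := by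
  induction k with
  | zero => simp [Finset.prod_range_succ, f2_0, f2_1]
  | succ k ih =>
    rw [show 6 * (k+1) + 2 = (6*k + 2) + 6 from by ring, Finset.prod_range_add, ih]
    have hblock : ∏ x ∈ range 6, f2 (6*k + 2 + x) = ∏ x ∈ range 6, f2 (2 + x) := by
      refine Finset.prod_congr rfl (fun x _ => ?_)
      rw [show 6*k + 2 + x = 6*k + (2 + x) from by ring]
      exact f2_add (6*k) (2+x) (cast6k k)
    rw [hblock]
    rw [Finset.prod_range_succ, Finset.prod_range_succ, Finset.prod_range_succ,
      Finset.prod_range_succ, Finset.prod_range_succ, Finset.prod_range_one]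
    norm_num [f2_2, f2_3, f2_4, f2_5, f2_6, f2_7]
    ring

lemma coeffkey (k : ℕ) : (((1 - X) * (X+1)^(2*k) : (ZMod 3)[X])).coeff k = (catalan k : ZMod 3) := by
  rcases Nat.eq_zero_or_pos k with hk | hk
  · subst hk; simp
  · have hp : ((1 - X) * (X+1)^(2*k) : (ZMod 3)[X])
        = (X+1)^(2*k) - X * (X+1)^(2*k) := by ring
    rw [hp, Polynomial.coeff_sub]
    obtain ⟨m, rfl⟩ : ∃ m, k = m + 1 := ⟨k - 1, by omega⟩
    rw [Polynomial.coeff_X_mul, Polynomial.coeff_X_add_one_pow, Polynomial.coeff_X_add_one_pow]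
    have hci := catalan_int (m+1) (by omega)
    have hc : (catalan (m+1) : ZMod 3) = (((catalan (m+1) : ℤ)) : ZMod 3) := by push_cast; ring
    rw [hc, hci, show m + 1 - 1 = m from by omega]
    push_cast
    ring

lemma zmod_eq_of_v (n : ℕ) (hn : n ≠ 0) :
    ((v n : ℤ) : ZMod 3) =
      ((1 - X) * ∏ j ∈ Finset.range (2 * n - 2),
        (C (((2 * n : ℤ) - 3 - (j : ℤ) : ℤ) : ZMod 3) + C ((j : ℤ) : ZMod 3) * X)).coeff (n - 1) := by
  have h1 : ((v n : ℤ) : ZMod 3) =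
      (((1 - X) * ∏ j ∈ Finset.range (2 * n - 2),
        (C ((2 * n : ℤ) - 3 - (j : ℤ)) + C (j : ℤ) * X)).map
          (Int.castRingHom (ZMod 3))).coeff (n - 1) := by
    rw [v, if_neg hn, Polynomial.coeff_map]
    rfl
  rw [h1, Polynomial.map_mul, Polynomial.map_sub, Polynomial.map_one, Polynomial.map_X,
    Polynomial.map_prod]
  congr 2
  refine Finset.prod_congr rfl (fun j _ => ?_)
  rw [Polynomial.map_add, Polynomial.map_mul, Polynomial.map_C, Polynomial.map_C,
    Polynomial.map_X]
  rfl

lemma h3zero : (3 : ZMod 3) = 0 := by decide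

theorem v_mod_three (k : ℕ) :
    v (1 + 3 * k) ≡ (catalan k : ℤ) [ZMOD 3] ∧
    v (2 + 3 * k) ≡ (catalan k : ℤ) [ZMOD 3] ∧
    (1 ≤ k → v (3 * k) ≡ 0 [ZMOD 3]) := by
  refine ⟨?_, ?_, ?_⟩
  · refine (ZMod.intCast_eq_intCast_iff _ _ 3).mp ?_
    rw [zmod_eq_of_v (1 + 3*k) (by omega)]
    rw [show 2 * (1 + 3*k) - 2 = 6*k from by omega, show 1 + 3*k - 1 = 3*k from by omega]
    have hfac : ∀ j ∈ range (6*k),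
        (C (((2 * (1 + 3*k : ℕ) : ℤ) - 3 - (j : ℤ) : ℤ) : ZMod 3) + C ((j : ℤ) : ZMod 3) * X)
          = f1 j := by
      intro j _
      have hB : (((j:ℤ)) : ZMod 3) = (j : ZMod 3) := by push_cast; ring
      have hA : (((2 * (1 + 3*k : ℕ) : ℤ) - 3 - (j : ℤ) : ℤ) : ZMod 3)
          = (-1 : ZMod 3) - (j : ZMod 3) := by
        push_cast
        linear_combination (2 * (k : ZMod 3)) * h3zero
      rw [hA, hB, f1]
    rw [Finset.prod_congr rfl hfac, prodf1]
    have hcomm : ((1 - X) * (X^(2*k) * (X+1)^(2*k)) : (ZMod 3)[X])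
        = X^(2*k) * ((1-X) * (X+1)^(2*k)) := by ring
    rw [hcomm, show 3*k = k + 2*k from by ring, Polynomial.coeff_X_pow_mul, coeffkey]
    push_cast; ring
  · refine (ZMod.intCast_eq_intCast_iff _ _ 3).mp ?_
    rw [zmod_eq_of_v (2 + 3*k) (by omega)]
    rw [show 2 * (2 + 3*k) - 2 = 6*k + 2 from by omega, show 2 + 3*k - 1 = 3*k + 1 from by omega]
    have hfac : ∀ j ∈ range (6*k+2),
        (C (((2 * (2 + 3*k : ℕ) : ℤ) - 3 - (j : ℤ) : ℤ) : ZMod 3) + C ((j : ℤ) : ZMod 3) * X)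
          = f2 j := by
      intro j _
      have hB : (((j:ℤ)) : ZMod 3) = (j : ZMod 3) := by push_cast; ring
      have hA : (((2 * (2 + 3*k : ℕ) : ℤ) - 3 - (j : ℤ) : ℤ) : ZMod 3)
          = (1 : ZMod 3) - (j : ZMod 3) := by
        push_cast
        linear_combination (2 * (k : ZMod 3)) * h3zero
      rw [hA, hB, f2]
    rw [Finset.prod_congr rfl hfac, prodf2]
    have hcomm : ((1 - X) * (X^(2*k+1) * (X+1)^(2*k)) : (ZMod 3)[X])
        = X^(2*k+1) * ((1-X) * (X+1)^(2*k)) := by ring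
    rw [hcomm, show 3*k + 1 = k + (2*k+1) from by ring, Polynomial.coeff_X_pow_mul, coeffkey]
    push_cast; ring
  · intro hk
    refine (ZMod.intCast_eq_intCast_iff _ _ 3).mp ?_
    rw [zmod_eq_of_v (3*k) (by omega)]
    have hz : (0 : ℕ) ∈ range (2 * (3*k) - 2) := by
      simp only [Finset.mem_range]; omega
    rw [Finset.prod_eq_zero hz]
    · push_cast; simp
    · have hc : (((2 * (3*k : ℕ) : ℤ) - 3 - ((0:ℕ) : ℤ) : ℤ) : ZMod 3) = 0 := by
        push_cast
        linear_combination (2 * (k : ZMod 3) - 1) * h3zero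
      rw [hc]
      simp
end

section
/- Let p be a prime, r ≥ 1, and j an integer. Then the polynomial ∏_{i=0}^{p^r - 1}(i·x - i + j), reduced modulo p^r, depends only on the residue class of j modulo p; that is, for any integer k, ∏_{i=0}^{p^r - 1}(i·x - i + j) ≡ ∏_{i=0}^{p^r - 1}(i·x - i + j + kp) (mod p^r) as polynomials with coefficients in Z/p^r Z. -/
open Polynomial Finset

-- reindexing lemma
lemma aux_prod_mul {M : Type*} [CommMonoid M] (f : ℕ → M) (a : ℕ) :
    ∀ b : ℕ, ∏ i ∈ Finset.range (a * b), f i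
      = ∏ v ∈ Finset.range b, ∏ u ∈ Finset.range a, f (a * v + u) := by
  intro b
  induction b with
  | zero => simp
  | succ n ih =>
      rw [Nat.mul_succ, Finset.prod_range_add, ih, Finset.prod_range_succ]

-- binomial with nilpotent
lemma aux_pow {R : Type*} [CommRing R] (x b : R) (hx : x * x = 0) :
    ∀ n : ℕ, n ≠ 0 → (b + x) ^ n = b ^ n + (n : R) * b ^ (n - 1) * x := by
  have aux : ∀ m : ℕ, (b + x) ^ (m + 1) = b ^ (m + 1) + ((m + 1 : ℕ) : R) * b ^ m * x := by
    intro m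
    induction m with
    | zero => push_cast; ring
    | succ m ih =>
        rw [pow_succ, ih]
        push_cast
        ring_nf
        linear_combination (((m : R) + 1) * b ^ m) * hx
  intro n hn
  obtain ⟨m, rfl⟩ := Nat.exists_eq_succ_of_ne_zero hn
  simpa using aux m

lemma aux_gauss {R : Type*} [CommRing R] (x A : R) (hx : x * x = 0) :
    ∀ n : ℕ, n ≠ 0 →
      ∏ v ∈ Finset.range n, (A + (v : R) * x)
        = A ^ n + (∑ v ∈ Finset.range n, (v : R)) * (A ^ (n - 1) * x) := by
  have aux : ∀ m : ℕ, ∏ v ∈ Finset.range (m + 1), (A + (v : R) * x)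
      = A ^ (m + 1) + (∑ v ∈ Finset.range (m + 1), (v : R)) * (A ^ m * x) := by
    intro m
    induction m with
    | zero => simp
    | succ m ih =>
        rw [Finset.prod_range_succ, ih]
        conv_rhs => rw [Finset.sum_range_succ]
        push_cast
        linear_combination ((∑ v ∈ Finset.range (m + 1), (v : R)) * ((m : R) + 1) * A ^ m) * hx
  intro n hn
  obtain ⟨m, rfl⟩ := Nat.exists_eq_succ_of_ne_zero hn
  simpa using aux m

lemma aux_two_systems {R R' : Type*} [CommRing R] [CommRing R'] (ρ : R →+* R') (x : R)
    (hx : x * x = 0) (hker : ∀ y, ρ y = 0 → x * y = 0) (c d c' d' : ℕ → R)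
    (hmc : ∀ u, ρ (c u) = ρ (c' u)) (hmd : ∀ u, ρ (d u) = ρ (d' u)) :
    ∀ n : ℕ, (∏ u ∈ Finset.range n, c u = ∏ u ∈ Finset.range n, c' u) →
      ∏ u ∈ Finset.range n, (c u + d u * x) = ∏ u ∈ Finset.range n, (c' u + d' u * x) := by
  have haux : ∀ n : ℕ, ∃ S S' : R,
      (∏ u ∈ Finset.range n, (c u + d u * x) = ∏ u ∈ Finset.range n, c u + S * x) ∧
      (∏ u ∈ Finset.range n, (c' u + d' u * x) = ∏ u ∈ Finset.range n, c' u + S' * x) ∧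
      ρ S = ρ S' := by
    intro n
    induction n with
    | zero => exact ⟨0, 0, by simp, by simp, rfl⟩
    | succ n ih =>
        obtain ⟨S, S', h1, h2, h3⟩ := ih
        refine ⟨S * c n + d n * ∏ u ∈ Finset.range n, c u,
                S' * c' n + d' n * ∏ u ∈ Finset.range n, c' u, ?_, ?_, ?_⟩
        · rw [Finset.prod_range_succ, h1, Finset.prod_range_succ]
          linear_combination (S * d n) * hx
        · rw [Finset.prod_range_succ, h2, Finset.prod_range_succ]
          linear_combination (S' * d' n) * hx
        · have hprod : ρ (∏ u ∈ Finset.range n, c u) = ρ (∏ u ∈ Finset.range n, c' u) := by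
            rw [map_prod, map_prod]
            exact Finset.prod_congr rfl fun u _ => hmc u
          rw [map_add, map_add, map_mul, map_mul, map_mul, map_mul, h3, hmc, hmd, hprod]
  intro n hc
  obtain ⟨S, S', h1, h2, h3⟩ := haux n
  have hxS : x * (S - S') = 0 := hker _ (by rw [map_sub, h3, sub_self])
  rw [h1, h2, hc]
  linear_combination hxS

lemma aux_poly_ker {N m : ℕ} [NeZero N] (hm : m ∣ N) (a b : Polynomial (ZMod N))
    (h : a.map (ZMod.castHom hm (ZMod m)) = b.map (ZMod.castHom hm (ZMod m))) :
    ∃ e, a = b + Polynomial.C (m : ZMod N) * e := by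
  have hdvd : Polynomial.C ((m : ℕ) : ZMod N) ∣ a - b := by
    rw [Polynomial.C_dvd_iff_dvd_coeff]
    intro i
    have hco : ((((a - b).coeff i).val : ℕ) : ZMod m) = 0 := by
      have : (ZMod.castHom hm (ZMod m)) ((a - b).coeff i) = 0 := by
        have := congrArg (fun q => Polynomial.coeff q i) h
        simp only [Polynomial.coeff_map] at this
        simp [Polynomial.coeff_sub, map_sub, this]
      rw [← this]
      conv_rhs => rw [← ZMod.natCast_zmod_val ((a - b).coeff i)]
      rw [map_natCast]
    rw [ZMod.natCast_eq_zero_iff] at hco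
    obtain ⟨cc, hcc⟩ := hco
    refine ⟨(cc : ZMod N), ?_⟩
    conv_lhs => rw [← ZMod.natCast_zmod_val ((a - b).coeff i)]
    rw [hcc]
    push_cast
    ring
  obtain ⟨e, he⟩ := hdvd
  exact ⟨e, by linear_combination he⟩

lemma key (p : ℕ) (hp0 : p ≠ 0) :
    ∀ r : ℕ, 1 ≤ r → ∀ n : ℕ, n = p ^ r → ∀ j j' : ℤ, ((j : ZMod p) = (j' : ZMod p)) →
      ∏ i ∈ Finset.range n, (C (i : ZMod n) * (X - 1) + C ((j : ℤ) : ZMod n))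
        = ∏ i ∈ Finset.range n, (C (i : ZMod n) * (X - 1) + C ((j' : ℤ) : ZMod n)) := by
  intro r
  induction r with
  | zero => omega
  | succ r ih =>
      intro _ n hn j j' h
      rcases Nat.eq_zero_or_pos r with rfl | hr
      · -- base case : n = p
        rw [pow_one] at hn
        subst hn
        refine Finset.prod_congr rfl fun i _ => ?_
        rw [h]
      · -- inductive step
        have hr1 : 1 ≤ r := hr
        rw [pow_succ] at hn
        subst hn
        set N := p ^ r * p with hN
        haveI : NeZero N := ⟨by positivity⟩
        have hS : True := trivial
        have hpdvd : p ∣ N := dvd_mul_left p (p ^ r)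
        have hprdvd : p ^ r ∣ N := dvd_mul_right (p ^ r) p
        set ρ0 : ZMod N →+* ZMod p := ZMod.castHom hpdvd (ZMod p) with hρ0
        set ψ0 : ZMod N →+* ZMod (p ^ r) := ZMod.castHom hprdvd (ZMod (p ^ r)) with hψ0
        set B : Polynomial (ZMod N) := C ((p ^ r : ℕ) : ZMod N) * (X - 1) with hB
        have hsq : ((p ^ r : ℕ) : ZMod N) * ((p ^ r : ℕ) : ZMod N) = 0 := by
          rw [← Nat.cast_mul, ZMod.natCast_eq_zero_iff, hN]
          exact Nat.mul_dvd_mul_left (p ^ r) (dvd_pow_self p (by omega))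
        have hCsq : C ((p ^ r : ℕ) : ZMod N) * C ((p ^ r : ℕ) : ZMod N) = 0 := by
          rw [← C_mul, hsq, C_0]
        have hB2 : B * B = 0 := by
          rw [hB]; linear_combination ((X : Polynomial (ZMod N)) - 1) ^ 2 * hCsq
        have hNcast : ((N : ℕ) : ZMod N) = 0 := ZMod.natCast_self N
        have hker : ∀ y : Polynomial (ZMod N), y.map ρ0 = 0 → B * y = 0 := by
          intro y hy
          obtain ⟨e, he⟩ := aux_poly_ker hpdvd y 0 (by simpa using hy)
          have hc : C ((p ^ r : ℕ) : ZMod N) * C ((p : ℕ) : ZMod N) = 0 := by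
            rw [← C_mul, ← Nat.cast_mul, ← hN, hNcast, C_0]
          rw [he, hB]
          linear_combination ((X : Polynomial (ZMod N)) - 1) * e * hc
        set A : ℤ → ℕ → Polynomial (ZMod N) := fun jj u => C ((u : ℕ) : ZMod N) * (X - 1) + C ((jj : ℤ) : ZMod N)
          with hA
        have hsplit : ∀ (jj : ℤ),
            (∏ i ∈ Finset.range N, (C ((i : ℕ) : ZMod N) * (X - 1) + C ((jj : ℤ) : ZMod N)))
            = ∏ u ∈ Finset.range (p ^ r),
                ((A jj u) ^ p
                  + ((∑ v ∈ Finset.range p, (v : Polynomial (ZMod N))) * (A jj u) ^ (p - 1)) * B) := by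
          intro jj
          rw [show Finset.range N = Finset.range (p ^ r * p) from by rw [hN],
            aux_prod_mul _ (p ^ r) p, Finset.prod_comm]
          refine Finset.prod_congr rfl fun u _ => ?_
          have hfac : ∀ v ∈ Finset.range p,
              (C (((p ^ r * v + u : ℕ)) : ZMod N) * (X - 1) + C ((jj : ℤ) : ZMod N))
                = A jj u + (v : Polynomial (ZMod N)) * B := by
            intro v _
            rw [hA, hB]
            simp only [Nat.cast_add, Nat.cast_mul, Nat.cast_pow, C_add, C_mul, C_pow,
              Polynomial.C_eq_natCast]
            push_cast
            ring
          rw [Finset.prod_congr rfl hfac, aux_gauss B (A jj u) hB2 p hp0]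
          ring
        have hAmod : ∀ u, (A j u).map ρ0 = (A j' u).map ρ0 := by
          intro u
          simp only [hA, Polynomial.map_add, Polynomial.map_mul, Polynomial.map_sub,
            Polynomial.map_one, map_C, Polynomial.map_X, map_natCast, map_intCast,
            Polynomial.map_natCast, Polynomial.map_intCast]
          have hjj : ((j : ℤ) : Polynomial (ZMod p)) = ((j' : ℤ) : Polynomial (ZMod p)) := by
            rw [← Polynomial.C_eq_intCast, ← Polynomial.C_eq_intCast, h]
          rw [hjj]
        have hprodA : ∏ u ∈ Finset.range (p ^ r), (A j u) ^ p
            = ∏ u ∈ Finset.range (p ^ r), (A j' u) ^ p := by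
          rw [Finset.prod_pow, Finset.prod_pow]
          have hmap : ∀ jj : ℤ, (∏ u ∈ Finset.range (p ^ r), A jj u).map ψ0
              = ∏ u ∈ Finset.range (p ^ r),
                  (C (u : ZMod (p ^ r)) * (X - 1) + C ((jj : ℤ) : ZMod (p ^ r))) := by
            intro jj
            rw [Polynomial.map_prod]
            refine Finset.prod_congr rfl fun u _ => ?_
            simp [hA, Polynomial.map_add, Polynomial.map_mul, Polynomial.map_sub, map_C,
              map_natCast, map_intCast]
          obtain ⟨e, he⟩ := aux_poly_ker hprdvd (∏ u ∈ Finset.range (p ^ r), A j u)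
            (∏ u ∈ Finset.range (p ^ r), A j' u)
            (by rw [hmap j, hmap j']; exact ih hr1 (p ^ r) rfl j j' h)
          have hx2 : (C ((p ^ r : ℕ) : ZMod N) * e) * (C ((p ^ r : ℕ) : ZMod N) * e) = 0 := by
            linear_combination e ^ 2 * hCsq
          rw [he, aux_pow _ _ hx2 p hp0]
          have hpx : ((p : ℕ) : Polynomial (ZMod N)) * (C ((p ^ r : ℕ) : ZMod N) * e) = 0 := by
            have hc : C ((p : ℕ) : ZMod N) * C ((p ^ r : ℕ) : ZMod N) = 0 := by
              rw [← C_mul, ← Nat.cast_mul, mul_comm p (p ^ r), ← hN, hNcast, C_0]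
            rw [← Polynomial.C_eq_natCast]
            linear_combination e * hc
          linear_combination ((∏ u ∈ Finset.range (p ^ r), A j' u) ^ (p - 1)) * hpx
        rw [hsplit j, hsplit j']
        refine aux_two_systems (Polynomial.mapRingHom ρ0) B hB2 ?_ _ _ _ _ ?_ ?_ (p ^ r) hprodA
        · intro y hy
          exact hker y (by simpa using hy)
        · intro u
          simp only [Polynomial.coe_mapRingHom, Polynomial.map_pow, hAmod u]
        · intro u
          simp only [Polynomial.coe_mapRingHom, Polynomial.map_mul, Polynomial.map_pow, hAmod u]

theorem prod_depends_only_on_class (p r : ℕ) (hp : p.Prime) (hr : 1 ≤ r)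
    (j k : ℤ) :
    (∏ i ∈ Finset.range (p ^ r),
        (C (i : ℤ) * X - C (i : ℤ) + C j)).map (Int.castRingHom (ZMod (p ^ r))) =
    (∏ i ∈ Finset.range (p ^ r),
        (C (i : ℤ) * X - C (i : ℤ) + C (j + k * p))).map (Int.castRingHom (ZMod (p ^ r))) := by
  have hmap : ∀ jj : ℤ,
      (∏ i ∈ Finset.range (p ^ r),
          (C (i : ℤ) * X - C (i : ℤ) + C jj)).map (Int.castRingHom (ZMod (p ^ r)))
        = ∏ i ∈ Finset.range (p ^ r),
            (C (i : ZMod (p ^ r)) * (X - 1) + C ((jj : ℤ) : ZMod (p ^ r))) := by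
    intro jj
    rw [Polynomial.map_prod]
    refine Finset.prod_congr rfl fun i _ => ?_
    simp only [Polynomial.map_add, Polynomial.map_sub, Polynomial.map_mul, map_C,
      Polynomial.map_X, Polynomial.map_natCast, Polynomial.map_intCast, eq_intCast,
      Int.cast_natCast, Polynomial.C_eq_natCast, Polynomial.C_eq_intCast]
    ring
  rw [hmap j, hmap (j + k * p)]
  refine key p hp.ne_zero r hr (p ^ r) rfl j (j + k * p) ?_
  push_cast
  simp [ZMod.natCast_self]
end

section
/- If p ≥ 5 is a prime, then v_{(p+3)/2} ≡ -2p^3 (mod p^4). -/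
open Polynomial Finset

lemma choose_neg_one (p : ℕ) (hp : p.Prime) : ∀ j, j ≤ p - 1 →
    (((p - 1).choose j : ℕ) : ZMod p) = (-1) ^ j := by
  obtain ⟨q, rfl⟩ : ∃ q, p = q + 1 := ⟨p - 1, (Nat.succ_pred_eq_of_pos hp.pos).symm⟩
  intro j
  induction j with
  | zero => simp
  | succ j ih =>
    intro hj
    have hj' : j ≤ q + 1 - 1 := by omega
    have hpascal : (q + 1 - 1).choose j + (q + 1 - 1).choose (j + 1) = (q + 1).choose (j + 1) := by
      simp [Nat.choose_succ_succ]
    have hdvd : (q + 1) ∣ (q + 1).choose (j + 1) :=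
      Nat.Prime.dvd_choose_self hp (by omega) (by omega)
    have h0 : (((q + 1).choose (j + 1) : ℕ) : ZMod (q + 1)) = 0 := by
      rw [ZMod.natCast_eq_zero_iff]; exact hdvd
    have hc := congrArg (fun m : ℕ => (m : ZMod (q + 1))) hpascal
    simp only [Nat.cast_add] at hc
    rw [h0, ih hj'] at hc
    have h2 : (((q + 1 - 1).choose (j + 1) : ℕ) : ZMod (q + 1)) = -(-1 : ZMod (q + 1)) ^ j := by
      linear_combination hc
    rw [h2, pow_succ]
    ring

lemma mul_p_cast (p : ℕ) (x y : ℤ) (h : (x : ZMod p) = (y : ZMod p)) :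
    (p : ZMod (p^2)) * (x : ZMod (p^2)) = (p : ZMod (p^2)) * (y : ZMod (p^2)) := by
  have hd : (p : ℤ) ∣ y - x := by
    rwa [ZMod.intCast_eq_intCast_iff_dvd_sub] at h
  have hd2 : ((p^2 : ℕ) : ℤ) ∣ (p : ℤ) * (y - x) := by
    push_cast; rw [sq]; exact mul_dvd_mul_left _ hd
  have h0 : (((p : ℤ) * (y - x) : ℤ) : ZMod (p^2)) = 0 := by
    rw [ZMod.intCast_zmod_eq_zero_iff_dvd]; exact_mod_cast hd2
  push_cast at h0
  linear_combination -h0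


lemma sum_erase_dvd (p : ℕ) (hp : p.Prime) (hp5 : 5 ≤ p) :
    p ∣ ∑ j ∈ range (p - 1), ∏ i ∈ (range (p - 1)).erase j, (i + 1) := by
  haveI : Fact p.Prime := ⟨hp⟩
  rw [← ZMod.natCast_eq_zero_iff]
  push_cast
  set T : ℕ → ZMod p := fun j => ∏ i ∈ (range (p - 1)).erase j, ((i : ZMod p) + 1) with hT
  have key : ∀ j ∈ range (p - 1), ((j : ZMod p) + 1) * T j = ((p - 1).factorial : ZMod p) := by
    intro j hj
    have h := Finset.mul_prod_erase (range (p - 1)) (fun i => ((i : ZMod p) + 1)) hj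
    rw [hT]; rw [h]
    have h2 : (∏ i ∈ range (p - 1), ((i : ZMod p) + 1)) = (((p-1).factorial : ℕ) : ZMod p) := by
      rw [← Finset.prod_range_add_one_eq_factorial]
      push_cast
      rfl
    simpa using h2
  have hne : ∀ j, j ∈ range (p - 1) → ((j : ZMod p) + 1) ≠ 0 := by
    intro j hj
    simp only [mem_range] at hj
    have h : ((j : ZMod p) + 1) = ((j + 1 : ℕ) : ZMod p) := by push_cast; ring
    rw [h, Ne, ZMod.natCast_eq_zero_iff]
    intro hdvd
    have := Nat.le_of_dvd (by omega) hdvd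
    omega
  have hrefl : ∀ j ∈ range (p - 1), T (p - 1 - 1 - j) = -T j := by
    intro j hj
    simp only [mem_range] at hj
    have hmem : p - 1 - 1 - j ∈ range (p - 1) := by simp only [mem_range]; omega
    have h1 := key _ hmem
    have h2 := key j (by simp only [mem_range]; omega)
    have hcast : ((p - 1 - 1 - j : ℕ) : ZMod p) + 1 = -((j : ZMod p) + 1) := by
      have hn : (p - 1 - 1 - j) + 1 + (j + 1) = p := by omega
      have hc2 := congrArg (fun m : ℕ => (m : ZMod p)) hn
      simp only [Nat.cast_add, Nat.cast_one, ZMod.natCast_self] at hc2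
      linear_combination hc2
    rw [hcast] at h1
    have h3 := h1.trans h2.symm
    have hu := hne j (by simp only [mem_range]; omega)
    have h4 : ((j : ZMod p) + 1) * T (p - 1 - 1 - j) = ((j : ZMod p) + 1) * (-T j) := by
      linear_combination -h3
    exact mul_left_cancel₀ hu h4
  have hS : ∑ j ∈ range (p - 1), T j = 0 := by
    have h1 : ∑ j ∈ range (p - 1), T (p - 1 - 1 - j) = ∑ j ∈ range (p - 1), T j :=
      Finset.sum_range_reflect T (p - 1)
    rw [Finset.sum_congr rfl hrefl] at h1
    rw [Finset.sum_neg_distrib] at h1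
    have h2 : (2 : ZMod p) * ∑ j ∈ range (p - 1), T j = 0 := by linear_combination -h1
    have h2ne : (2 : ZMod p) ≠ 0 := by
      rw [← Nat.cast_two (R := ZMod p), Ne, ZMod.natCast_eq_zero_iff]
      intro hdvd
      have := Nat.le_of_dvd (by omega) hdvd
      omega
    exact (mul_eq_zero.mp h2).resolve_left h2ne
  calc ∑ j ∈ range (p-1), ∏ i ∈ (range (p-1)).erase j, ((i : ZMod p) + 1)
      = ∑ j ∈ range (p-1), T j := rfl
    _ = 0 := hS


lemma eps_prod {R : Type*} [CommRing R] (ε : R) (hε : ε * ε = 0) (a : ℕ → R) (s : Finset ℕ) :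
    ∏ j ∈ s, (a j + ε) = ∏ j ∈ s, a j + ε * ∑ j ∈ s, ∏ i ∈ s.erase j, a i := by
  classical
  induction s using Finset.induction with
  | empty => simp
  | @insert x s hx ih =>
    rw [Finset.prod_insert hx, Finset.prod_insert hx, Finset.sum_insert hx, ih]
    have h1 : (insert x s).erase x = s := Finset.erase_insert hx
    have h2 : ∀ j ∈ s, ∏ i ∈ (insert x s).erase j, a i = a x * ∏ i ∈ s.erase j, a i := by
      intro j hj
      have hne : x ≠ j := fun h => hx (h ▸ hj)
      rw [Finset.erase_insert_of_ne hne, Finset.prod_insert (fun h => hx (Finset.mem_of_mem_erase h))]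
    rw [h1, Finset.sum_congr rfl h2, ← Finset.mul_sum]
    linear_combination (∑ j ∈ s, ∏ i ∈ s.erase j, a i) * hε

lemma key_s14 (p k : ℕ) (hp : p.Prime) (hp5 : 5 ≤ p) (hk : p = 2 * k + 1) :
    ((((1 - X) * ∏ j ∈ range (2 * k),
        (C ((p : ℤ) - ((j : ℤ) + 1)) + C ((j : ℤ) + 1) * X)).coeff k : ℤ) : ZMod (p ^ 2))
      = ((-2 * (p : ℤ) : ℤ) : ZMod (p ^ 2)) := by
  haveI : Fact p.Prime := ⟨hp⟩
  have hk2 : 2 ≤ k := by omega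
  have hmapped : ((((1 - X) * ∏ j ∈ range (2 * k),
        (C ((p : ℤ) - ((j : ℤ) + 1)) + C ((j : ℤ) + 1) * X)).coeff k : ℤ) : ZMod (p ^ 2))
      = (((1 - X) * ∏ j ∈ range (2 * k),
        (C ((p : ℤ) - ((j : ℤ) + 1)) + C ((j : ℤ) + 1) * X)).map
          (Int.castRingHom (ZMod (p ^ 2)))).coeff k := by
    rw [Polynomial.coeff_map]
    simp
  rw [hmapped, Polynomial.map_mul, Polynomial.map_sub, Polynomial.map_one, Polynomial.map_X,
    Polynomial.map_prod]
  have hfacmap : ∀ j ∈ range (2 * k),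
      (C ((p : ℤ) - ((j : ℤ) + 1)) + C ((j : ℤ) + 1) * X).map (Int.castRingHom (ZMod (p ^ 2)))
      = C (((j : ℕ) : ZMod (p ^ 2)) + 1) * (X - 1) + C ((p : ℕ) : ZMod (p ^ 2)) := by
    intro j _
    rw [Polynomial.map_add, Polynomial.map_mul, Polynomial.map_C, Polynomial.map_C,
      Polynomial.map_X]
    have e1 : (Int.castRingHom (ZMod (p ^ 2))) ((p : ℤ) - ((j : ℤ) + 1))
        = ((p : ℕ) : ZMod (p ^ 2)) - (((j : ℕ) : ZMod (p ^ 2)) + 1) := by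
      simp only [eq_intCast]
      push_cast
      ring
    have e2 : (Int.castRingHom (ZMod (p ^ 2))) ((j : ℤ) + 1)
        = (((j : ℕ) : ZMod (p ^ 2)) + 1) := by
      simp only [eq_intCast]
      push_cast
      ring
    rw [e1, e2, map_sub]
    ring
  rw [Finset.prod_congr rfl hfacmap]
  have hpp : ((p : ℕ) : ZMod (p ^ 2)) * ((p : ℕ) : ZMod (p ^ 2)) = 0 := by
    rw [← Nat.cast_mul, show p * p = p ^ 2 from (sq p).symm, ZMod.natCast_self]
  have hCpp : (C ((p : ℕ) : ZMod (p ^ 2))) * (C ((p : ℕ) : ZMod (p ^ 2))) = 0 := by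
    rw [← C_mul, hpp, map_zero]
  rw [eps_prod (C ((p : ℕ) : ZMod (p ^ 2))) hCpp
      (fun j => C (((j : ℕ) : ZMod (p ^ 2)) + 1) * (X - 1)) (range (2 * k))]
  -- the epsilon-squared (sum) term vanishes
  have hdvd : p ∣ ∑ j ∈ range (2 * k), ∏ i ∈ (range (2 * k)).erase j, (i + 1) := by
    have h := sum_erase_dvd p hp hp5
    rwa [show p - 1 = 2 * k from by omega] at h
  have hsum0 : C ((p : ℕ) : ZMod (p ^ 2)) * ∑ j ∈ range (2 * k), ∏ i ∈ (range (2 * k)).erase j,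
      (C (((i : ℕ) : ZMod (p ^ 2)) + 1) * (X - 1)) = 0 := by
    have hcard : ∀ j ∈ range (2 * k), ∏ i ∈ (range (2 * k)).erase j,
        (C (((i : ℕ) : ZMod (p ^ 2)) + 1) * (X - 1))
        = C (((∏ i ∈ (range (2 * k)).erase j, (i + 1) : ℕ) : ZMod (p ^ 2))) * (X - 1) ^ (2 * k - 1) := by
      intro j hj
      rw [Finset.prod_mul_distrib, Finset.prod_const, Finset.card_erase_of_mem hj,
        Finset.card_range]
      congr 1
      rw [← map_prod]
      congr 1
      push_cast
      rfl
    rw [Finset.sum_congr rfl hcard, ← Finset.sum_mul, ← map_sum, ← Nat.cast_sum,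
      ← mul_assoc, ← C_mul, ← Nat.cast_mul]
    have hz : ((p * ∑ j ∈ range (2 * k), ∏ i ∈ (range (2 * k)).erase j, (i + 1) : ℕ)
        : ZMod (p ^ 2)) = 0 := by
      rw [ZMod.natCast_eq_zero_iff]
      obtain ⟨t, ht⟩ := hdvd
      exact ⟨t, by rw [ht]; ring⟩
    rw [hz, map_zero, zero_mul]
  have hmain : ∏ j ∈ range (2 * k), (C (((j : ℕ) : ZMod (p ^ 2)) + 1) * (X - 1))
      = C (((2 * k).factorial : ℕ) : ZMod (p ^ 2)) * (X - 1) ^ (2 * k) := by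
    rw [Finset.prod_mul_distrib, Finset.prod_const, Finset.card_range]
    congr 1
    rw [← map_prod]
    congr 1
    rw [← Finset.prod_range_add_one_eq_factorial]
    push_cast
    rfl
  rw [hmain, hsum0, add_zero]
  have hre : (1 - X) * (C (((2 * k).factorial : ℕ) : ZMod (p ^ 2)) * (X - 1) ^ (2 * k))
      = -(C (((2 * k).factorial : ℕ) : ZMod (p ^ 2)) * (X - 1) ^ (2 * k + 1)) := by ring
  rw [hre, coeff_neg, coeff_C_mul,
    show (X - 1 : (ZMod (p ^ 2))[X]) = X + C (-1) from by simp [sub_eq_add_neg],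
    coeff_X_add_C_pow, show 2 * k + 1 - k = k + 1 from by omega]
  -- final arithmetic in ZMod (p^2)
  have hR : ((-2 * (p : ℤ) : ℤ) : ZMod (p ^ 2)) = -2 * ((p : ℕ) : ZMod (p ^ 2)) := by
    push_cast; ring
  rw [hR]
  have hkU : IsUnit ((k : ℕ) : ZMod (p ^ 2)) := by
    rw [ZMod.isUnit_iff_coprime]
    have h1 : Nat.Coprime p k := (Nat.Prime.coprime_iff_not_dvd hp).mpr
      (fun h => by have := Nat.le_of_dvd (by omega) h; omega)
    exact Nat.Coprime.pow_right 2 h1.symm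
  have hchoose : ((k : ℕ) : ZMod (p ^ 2)) * (((2 * k + 1).choose k : ℕ) : ZMod (p ^ 2))
      = ((p : ℕ) : ZMod (p ^ 2)) * ((-1 : ZMod (p ^ 2)) ^ (k - 1)) := by
    have hnat := Nat.add_one_mul_choose_eq (2 * k) (k - 1)
    rw [show k - 1 + 1 = k from by omega] at hnat
    have hcast := congrArg (fun m : ℕ => (m : ZMod (p ^ 2))) hnat
    push_cast at hcast
    have hp2k : ((p : ℕ) : ZMod (p ^ 2)) = 2 * ((k : ℕ) : ZMod (p ^ 2)) + 1 := by
      rw [hk]; push_cast; ring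
    have hmp := mul_p_cast p ((2 * k).choose (k - 1) : ℤ) ((-1) ^ (k - 1) : ℤ) ?_
    · push_cast at hmp
      rw [hp2k] at hmp ⊢
      linear_combination hmp - hcast
    · have hcn := choose_neg_one p hp (k - 1) (by omega)
      rw [show p - 1 = 2 * k from by omega] at hcn
      push_cast
      rw [hcn]
  have hwilson : ((p : ℕ) : ZMod (p ^ 2)) * (((2 * k).factorial : ℕ) : ZMod (p ^ 2))
      = ((p : ℕ) : ZMod (p ^ 2)) * (-1) := by
    have hmp := mul_p_cast p ((2 * k).factorial : ℤ) (-1) ?_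
    · push_cast at hmp
      exact_mod_cast hmp
    · have hw := ZMod.wilsons_lemma (p := p)
      rw [show p - 1 = 2 * k from by omega] at hw
      push_cast
      rw [hw]
  have hpow : ((-1 : ZMod (p ^ 2)) ^ (k + 1)) * ((-1 : ZMod (p ^ 2)) ^ (k - 1)) = 1 := by
    rw [← pow_add, show k + 1 + (k - 1) = 2 * k from by omega, pow_mul]
    norm_num
  have hkcast : 2 * ((k : ℕ) : ZMod (p ^ 2)) + 1 = ((p : ℕ) : ZMod (p ^ 2)) := by
    have := congrArg (fun m : ℕ => (m : ZMod (p ^ 2))) hk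
    push_cast at this
    linear_combination -this
  refine hkU.mul_left_cancel ?_
  linear_combination (-((((2 * k).factorial : ℕ) : ZMod (p ^ 2)) * ((-1 : ZMod (p ^ 2)) ^ (k + 1)))) * hchoose
    - (((p : ℕ) : ZMod (p ^ 2)) * (((2 * k).factorial : ℕ) : ZMod (p ^ 2))) * hpow
    - hwilson + ((p : ℕ) : ZMod (p ^ 2)) * hkcast + hpp


theorem v_mod_p4 (p : ℕ) (hp : p.Prime) (hp5 : 5 ≤ p) :
    v ((p + 3) / 2) ≡ -2 * (p : ℤ) ^ 3 [ZMOD (p : ℤ) ^ 4] := by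
  haveI : Fact p.Prime := ⟨hp⟩
  obtain ⟨k, hk⟩ : Odd p := hp.odd_of_ne_two (by omega)
  have hk2 : 2 ≤ k := by omega
  have hpz : (p : ℤ) = 2 * (k : ℤ) + 1 := by exact_mod_cast congrArg (Nat.cast : ℕ → ℤ) hk
  have hn : (p + 3) / 2 = k + 2 := by omega
  rw [hn]
  set Pz : ℤ[X] := ∏ j ∈ range (2 * k), (C ((p : ℤ) - ((j : ℤ) + 1)) + C ((j : ℤ) + 1) * X)
    with hPz
  set c : ℤ := ((1 - X) * Pz).coeff k with hc
  -- Step 1 : v (k+2) = p^2 * c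
  have step1 : v (k + 2) = (p : ℤ) ^ 2 * c := by
    rw [v, if_neg (by omega)]
    have h1 : 2 * (k + 2) - 2 = (2 * k + 1) + 1 := by omega
    have h2 : ∀ j ∈ range ((2 * k + 1) + 1),
        C ((2 * ((k + 2 : ℕ) : ℤ)) - 3 - (j : ℤ)) + C (j : ℤ) * X
        = C ((p : ℤ) - (j : ℤ)) + C (j : ℤ) * X := by
      intro j _
      congr 2
      rw [hpz]; push_cast; ring
    rw [h1, Finset.prod_congr rfl h2, Finset.prod_range_succ, Finset.prod_range_succ']
    have hf0 : C ((p : ℤ) - ((0 : ℕ) : ℤ)) + C ((0 : ℕ) : ℤ) * X = C (p : ℤ) := by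
      simp
    have hfp : C ((p : ℤ) - ((2 * k + 1 : ℕ) : ℤ)) + C ((2 * k + 1 : ℕ) : ℤ) * X
        = C (p : ℤ) * X := by
      have e1 : (p : ℤ) - ((2 * k + 1 : ℕ) : ℤ) = 0 := by rw [hpz]; push_cast; ring
      have e2 : ((2 * k + 1 : ℕ) : ℤ) = (p : ℤ) := by rw [hpz]; push_cast; ring
      rw [e1, e2, C_0, zero_add]
    have hshift : ∀ j ∈ range (2 * k),
        C ((p : ℤ) - ((j + 1 : ℕ) : ℤ)) + C ((j + 1 : ℕ) : ℤ) * X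
        = C ((p : ℤ) - ((j : ℤ) + 1)) + C ((j : ℤ) + 1) * X := by
      intro j _
      push_cast
      ring_nf
    rw [hf0, hfp, Finset.prod_congr rfl hshift, ← hPz]
    have hre : (1 - X) * (Pz * C (p : ℤ) * (C (p : ℤ) * X))
        = C (p : ℤ) * (C (p : ℤ) * (X * ((1 - X) * Pz))) := by ring
    rw [hre, coeff_C_mul, coeff_C_mul]
    have hk1 : k + 2 - 1 = k + 1 := by omega
    rw [hk1, coeff_X_mul, ← hc]
    ring
  -- Step 2 : c ≡ -2p mod p^2
  have step2 : ((p : ℤ)) ^ 2 ∣ (-2 * (p : ℤ) - c) := by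
    have hcast : ((c : ℤ) : ZMod (p ^ 2)) = ((-2 * (p : ℤ) : ℤ) : ZMod (p ^ 2)) := by
      rw [hc, hPz]
      exact key_s14 p k hp hp5 hk
    rw [ZMod.intCast_eq_intCast_iff_dvd_sub] at hcast
    have : ((p ^ 2 : ℕ) : ℤ) = (p : ℤ) ^ 2 := by push_cast; ring
    rw [this] at hcast
    exact hcast
  obtain ⟨t, ht⟩ := step2
  rw [step1, Int.modEq_iff_dvd]
  exact ⟨t, by linear_combination (p : ℤ) ^ 2 * ht⟩
end

section
/- If p ≥ 5 is a prime, then v_{(p+3)/2} ≡ 2p^3·(1-p)·(p-1)!·4^{p-1} (mod p^5). -/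
open Polynomial Finset

/-!
Write `p = 2k + 1`. Pairing the factors `j` and `p - j` of the product defining `v`, whose
product is `j(p - j)(X - 1)² + p²X`, gives
`v_{k+2} = p² [X^k] (1 - X) ∏_{j=1}^{k} (a_j (X - 1)² + p²X)` with `a_j = j(p - j)`.
Modulo `p³` the terms of degree `≥ 2` in `p²X` vanish, and so does the linear one, since
`e_{k-1}(a_1, …, a_k) ≡ -(∏ a_j) ∑ 1/j² ≡ 0 (mod p)` for `p ≥ 5`. As `∏ a_j = (p - 1)!`,
this leaves `v_{k+2} ≡ p² (p - 1)! (-1)^k C(p, k) (mod p⁵)`. Finally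
`(k + 1) C(p, k) = p C(2k, k)`, and Morley's congruence `(-1)^k C(2k, k) ≡ 4^{p-1} (mod p²)`
gives `(-1)^k C(p, k) ≡ 2p(1 - p) 4^{p-1} (mod p³)`.
-/

open scoped Nat

theorem Finset.prod_range_two_mul {M : Type*} [CommMonoid M] (g : ℕ → M) (m : ℕ) :
    ∏ j ∈ range (2 * m), g j = ∏ j ∈ range m, (g j * g (2 * m - 1 - j)) := by
  rw [two_mul, prod_range_add, prod_mul_distrib, ← prod_range_reflect (fun j => g (m + j)) m]
  refine congrArg _ (prod_congr rfl fun j hj => congrArg g ?_)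
  have := mem_range.1 hj
  omega

theorem Finset.sum_range_two_mul {M : Type*} [AddCommMonoid M] (g : ℕ → M) (m : ℕ) :
    ∑ j ∈ range (2 * m), g j = ∑ j ∈ range m, (g j + g (2 * m - 1 - j)) :=
  prod_range_two_mul (M := Multiplicative M) g m

theorem Finset.prod_add_of_sq_eq_zero {ι R : Type*} [CommSemiring R] [DecidableEq ι]
    (s : Finset ι) (f : ι → R) {ε : R} (hε : ε ^ 2 = 0) :
    ∏ i ∈ s, (f i + ε) = ∏ i ∈ s, f i + ε * ∑ i ∈ s, ∏ j ∈ s.erase i, f j := by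
  induction s using Finset.induction_on with
  | empty => simp
  | insert a s ha ih =>
    have herase : ∀ i ∈ s,
        ∏ j ∈ (insert a s).erase i, f j = f a * ∏ j ∈ s.erase i, f j := fun i hi => by
      rw [erase_insert_of_ne (ne_of_mem_of_not_mem hi ha).symm,
        prod_insert fun h => ha (mem_of_mem_erase h)]
    rw [prod_insert ha, prod_insert ha, sum_insert ha, erase_insert ha, sum_congr rfl herase,
      ← mul_sum, ih]
    calc (f a + ε) * (∏ i ∈ s, f i + ε * ∑ i ∈ s, ∏ j ∈ s.erase i, f j)
        = f a * ∏ i ∈ s, f i + ε * (∏ i ∈ s, f i + f a * ∑ i ∈ s, ∏ j ∈ s.erase i, f j)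
          + ε ^ 2 * ∑ i ∈ s, ∏ j ∈ s.erase i, f j := by ring
      _ = _ := by rw [hε, zero_mul, add_zero]

theorem Finset.prod_range_mul_add_one_sub_of_sq_eq_zero {R : Type*} [CommRing R] {ε : R}
    (hε : ε ^ 2 = 0) (c : R) (k : ℕ) :
    ∏ i ∈ range k, (c * (i + 1) - ε) = c ^ k * (k ! : R) -
      ε * c ^ (k - 1) * ∑ i ∈ range k, ∏ j ∈ (range k).erase i, ((j : R) + 1) := by
  have h := prod_add_of_sq_eq_zero (range k) (fun i => c * ((i : R) + 1)) (ε := -ε)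
    (by rw [neg_sq, hε])
  simp only [← sub_eq_add_neg] at h
  have hfact : ∏ i ∈ range k, ((i : R) + 1) = k ! := by
    rw [← prod_range_add_one_eq_factorial, Nat.cast_prod]
    push_cast
    rfl
  rw [h, prod_mul_distrib, prod_const, card_range, hfact, sum_congr rfl fun i hi => by
    rw [prod_mul_distrib, prod_const, card_erase_of_mem hi, card_range], ← mul_sum]
  ring

theorem Finset.sum_prod_erase_eq_prod_mul_sum_inv {ι K : Type*} [Field K] [DecidableEq ι]
    {s : Finset ι} {f : ι → K} (hf : ∀ i ∈ s, f i ≠ 0) :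
    ∑ i ∈ s, ∏ j ∈ s.erase i, f j = (∏ i ∈ s, f i) * ∑ i ∈ s, (f i)⁻¹ := by
  rw [mul_sum]
  refine sum_congr rfl fun i hi => ?_
  rw [← mul_prod_erase s f hi, mul_comm (f i), mul_inv_cancel_right₀ (hf i hi)]

theorem ZMod.sum_range_natCast {M : Type*} [AddCommMonoid M] (n : ℕ) [NeZero n]
    (g : ZMod n → M) : ∑ i ∈ range n, g i = ∑ x, g x :=
  sum_nbij' (↑) ZMod.val (fun _ _ => mem_univ _) (fun x _ => mem_range.2 x.val_lt)
    (fun _ hi => ZMod.val_cast_of_lt (mem_range.1 hi)) (fun x _ => ZMod.natCast_zmod_val x)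
    (fun _ _ => rfl)

theorem ZMod.sum_range_inv_sq_eq_zero {p k : ℕ} [Fact p.Prime] (hpk : p = 2 * k + 1)
    (hp5 : 5 ≤ p) : ∑ i ∈ range k, (((i : ZMod p) + 1) ^ 2)⁻¹ = 0 := by
  have hsum : ∑ x : ZMod p, (x ^ 2)⁻¹ = 0 := by
    rw [← Equiv.sum_comp (Equiv.inv _)]
    simp only [Equiv.inv_apply, inv_pow, inv_inv]
    exact FiniteField.sum_pow_lt_card_sub_one (ZMod p) 2 (by rw [ZMod.card]; omega)
  have hreflect : ∀ i ∈ range k, ((2 * k - 1 - i : ℕ) : ZMod p) + 1 = -((i : ZMod p) + 1) := by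
    intro i hi
    have h : ((2 * k - 1 - i + 1 + (i + 1) : ℕ) : ZMod p) = 0 := by
      rw [show 2 * k - 1 - i + 1 + (i + 1) = p by have := mem_range.1 hi; omega,
        ZMod.natCast_self]
    rw [eq_neg_iff_add_eq_zero]
    exact_mod_cast h
  rw [← ZMod.sum_range_natCast, show range p = range (2 * k + 1) by rw [hpk], sum_range_succ',
    sum_range_two_mul] at hsum
  simp only [Nat.cast_add, Nat.cast_one] at hsum
  rw [sum_congr rfl fun i hi => by rw [hreflect i hi, neg_sq]] at hsum
  have h2 : (2 : ZMod p) ≠ 0 := by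
    rw [← Nat.cast_ofNat, Ne, ZMod.natCast_eq_zero_iff]
    exact fun h => absurd (Nat.le_of_dvd two_pos h) (by omega)
  simpa [← two_mul, ← mul_sum, h2] using hsum

theorem Polynomial.C_sub_add_C_mul_X_mul {R : Type*} [CommRing R] (p a : R) :
    (C (p - a) + C a * X) * (C a + C (p - a) * X) =
      C (a * (p - a)) * (X - 1) ^ 2 + C (p ^ 2) * X := by
  simp only [map_sub, map_mul, map_pow]
  ring

theorem Polynomial.coeff_one_sub_X_mul_X_sub_one_pow {R : Type*} [CommRing R] (k : ℕ) :
    ((1 - X) * (X - 1) ^ (2 * k) : R[X]).coeff k = (-1) ^ k * (2 * k + 1).choose k := by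
  have h : (1 - X) * (X - 1) ^ (2 * k) = -(X + C (-1 : R)) ^ (2 * k + 1) := by
    rw [map_neg, map_one]; ring
  rw [h, coeff_neg, coeff_X_add_C_pow, show 2 * k + 1 - k = k + 1 by omega]
  ring

def pairedCoeff (k j : ℕ) : ℤ := (j + 1) * (2 * k - j)

/-- `C (pairedCoeff k j) * (X - 1) ^ 2 + C ((2 * k + 1) ^ 2) * X` is the product of the factors
of index `j + 1` and `2 * k - j` in the definition of `v (k + 2)`. -/
noncomputable def pairedProduct (k : ℕ) : ℤ[X] :=
  ∏ j ∈ range k, (C (pairedCoeff k j) * (X - 1) ^ 2 + C ((2 * k + 1 : ℤ) ^ 2) * X)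

theorem v_add_two (k : ℕ) :
    v (k + 2) = (2 * k + 1 : ℤ) ^ 2 * ((1 - X) * pairedProduct k).coeff k := by
  have hfactor : ∀ j ∈ range (2 * (k + 1)),
      C ((2 * (k + 2 : ℕ) : ℤ) - 3 - (j : ℤ)) + C (j : ℤ) * X
        = C ((2 * k + 1 : ℤ) - j) + C (j : ℤ) * X := by
    intro j _
    push_cast
    ring_nf
  have hpair : ∀ j ≤ k, (C ((2 * k + 1 : ℤ) - j) + C (j : ℤ) * X) *
        (C ((2 * k + 1 : ℤ) - (2 * (k + 1) - 1 - j : ℕ)) +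
          C ((2 * (k + 1) - 1 - j : ℕ) : ℤ) * X)
      = C ((j : ℤ) * (2 * k + 1 - j)) * (X - 1) ^ 2 + C ((2 * k + 1 : ℤ) ^ 2) * X := by
    intro j hj
    rw [show ((2 * (k + 1) - 1 - j : ℕ) : ℤ) = 2 * k + 1 - j by omega, sub_sub_cancel]
    exact C_sub_add_C_mul_X_mul _ _
  rw [v, if_neg (by omega), show 2 * (k + 2) - 2 = 2 * (k + 1) by omega, prod_congr rfl hfactor,
    prod_range_two_mul, prod_range_succ', hpair 0 (Nat.zero_le _),
    prod_congr rfl fun j hj => hpair (j + 1) (mem_range.1 hj)]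
  have hQ : ∏ j ∈ range k, (C (((j + 1 : ℕ) : ℤ) * (2 * k + 1 - (j + 1 : ℕ))) * (X - 1) ^ 2
      + C ((2 * k + 1 : ℤ) ^ 2) * X) = pairedProduct k := by
    refine prod_congr rfl fun j _ => ?_
    simp only [pairedCoeff]
    push_cast
    ring_nf
  rw [hQ, Nat.cast_zero, zero_mul, map_zero, zero_mul, zero_add, show k + 2 - 1 = k + 1 from rfl,
    show ∀ c : ℤ, (1 - X) * (pairedProduct k * (C c * X)) =
      C c * (X * ((1 - X) * pairedProduct k)) from fun c => by ring, coeff_C_mul, coeff_X_mul]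

theorem prod_pairedCoeff (k : ℕ) : ∏ j ∈ range k, pairedCoeff k j = (2 * k)! := by
  rw [← prod_range_add_one_eq_factorial, Nat.cast_prod, prod_range_two_mul]
  refine prod_congr rfl fun j hj => ?_
  have := mem_range.1 hj
  push_cast [pairedCoeff, show 2 * k - 1 - j + 1 = 2 * k - j by omega,
    Nat.cast_sub (show j ≤ 2 * k by omega)]
  ring

theorem prime_dvd_sum_prod_erase_pairedCoeff {p k : ℕ} (hp : p.Prime) (hpk : p = 2 * k + 1)
    (hp5 : 5 ≤ p) : (p : ℤ) ∣ ∑ i ∈ range k, ∏ j ∈ (range k).erase i, pairedCoeff k j := by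
  have := Fact.mk hp
  have hp0 : (2 * k + 1 : ZMod p) = 0 := by
    exact_mod_cast (ZMod.natCast_eq_zero_iff (2 * k + 1) p).2 ⟨1, by omega⟩
  have ha : ∀ j ∈ range k, ((pairedCoeff k j : ℤ) : ZMod p) = -((j : ZMod p) + 1) ^ 2 :=
    fun j _ => by push_cast [pairedCoeff]; linear_combination ((j : ZMod p) + 1) * hp0
  have hne : ∀ j ∈ range k, ((pairedCoeff k j : ℤ) : ZMod p) ≠ 0 := fun j hj => by
    have hj1 : ((j + 1 : ℕ) : ZMod p) ≠ 0 := by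
      rw [Ne, ZMod.natCast_eq_zero_iff]
      exact Nat.not_dvd_of_pos_of_lt j.succ_pos (by have := mem_range.1 hj; omega)
    rw [ha j hj, neg_ne_zero]
    exact pow_ne_zero 2 (by exact_mod_cast hj1)
  rw [← ZMod.intCast_zmod_eq_zero_iff_dvd, Int.cast_sum]
  simp only [Int.cast_prod]
  rw [sum_prod_erase_eq_prod_mul_sum_inv hne,
    sum_congr rfl fun j hj => by rw [ha j hj, inv_neg], sum_neg_distrib,
    ZMod.sum_range_inv_sq_eq_zero hpk hp5, neg_zero, mul_zero]

theorem map_pairedProduct {p k : ℕ} (hp : p.Prime) (hpk : p = 2 * k + 1) (hp5 : 5 ≤ p) :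
    (pairedProduct k).map (Int.castRingHom (ZMod (p ^ 3))) =
      C (((2 * k)! : ℤ) : ZMod (p ^ 3)) * (X - 1) ^ (2 * k) := by
  obtain ⟨s, hs⟩ := prime_dvd_sum_prod_erase_pairedCoeff hp hpk hp5
  have hπ : ((p : ℤ) : ZMod (p ^ 3)) ^ 3 = 0 := by
    rw [Int.cast_natCast, ← Nat.cast_pow, ZMod.natCast_self]
  have hpZ : (p : ℤ) = 2 * k + 1 := by exact_mod_cast hpk
  simp only [pairedProduct, Polynomial.map_prod, Polynomial.map_add, Polynomial.map_mul,
    Polynomial.map_pow, Polynomial.map_sub, Polynomial.map_one, Polynomial.map_X, map_C,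
    Int.coe_castRingHom, ← hpZ]
  have hε : (C (((p : ℤ) ^ 2 : ℤ) : ZMod (p ^ 3)) * X) ^ 2 = 0 := by
    have hπ4 : ((p : ℤ) : ZMod (p ^ 3)) ^ (2 * 2) = 0 := by
      linear_combination ((p : ℤ) : ZMod (p ^ 3)) * hπ
    rw [mul_pow, ← map_pow, Int.cast_pow, ← pow_mul, hπ4, map_zero, zero_mul]
  rw [prod_add_of_sq_eq_zero _ _ hε, prod_mul_distrib, prod_const, card_range, ← map_prod,
    ← Int.cast_prod, prod_pairedCoeff, ← pow_mul, sum_congr rfl fun i hi => by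
      rw [prod_mul_distrib, prod_const, card_erase_of_mem hi, ← map_prod, ← Int.cast_prod],
    ← sum_mul, ← map_sum, ← Int.cast_sum, hs, add_eq_left]
  calc C (((p : ℤ) ^ 2 : ℤ) : ZMod (p ^ 3)) * X * (C (((p : ℤ) * s : ℤ) : ZMod (p ^ 3)) * _)
      = C (((p : ℤ) : ZMod (p ^ 3)) ^ 3 * s) * (X * ((X - 1) ^ 2) ^ (#(range k) - 1)) := by
        simp only [Int.cast_mul, Int.cast_pow, map_mul, map_pow]; ring
    _ = 0 := by rw [hπ, zero_mul, map_zero, zero_mul]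

theorem coeff_pairedProduct_modEq {p k : ℕ} (hp : p.Prime) (hpk : p = 2 * k + 1)
    (hp5 : 5 ≤ p) :
    ((1 - X) * pairedProduct k).coeff k ≡ (2 * k)! * ((-1) ^ k * p.choose k)
      [ZMOD (p : ℤ) ^ 3] := by
  rw [← Nat.cast_pow, ← ZMod.intCast_eq_intCast_iff, ← eq_intCast (Int.castRingHom _),
    ← coeff_map, Polynomial.map_mul, map_pairedProduct hp hpk hp5, Polynomial.map_sub,
    Polynomial.map_one, Polynomial.map_X, mul_left_comm, coeff_C_mul,
    coeff_one_sub_X_mul_X_sub_one_pow, ← hpk]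
  push_cast
  ring

theorem prod_range_two_mul_sub (k : ℕ) :
    ∏ i ∈ range k, ((2 * k : ℤ) - i) = k ! * k.centralBinom := by
  have h := Nat.descFactorial_eq_factorial_mul_choose (2 * k) k
  rw [Nat.descFactorial_eq_prod_range, ← Nat.centralBinom_eq_two_mul_choose] at h
  rw [← Nat.cast_mul, ← h, Nat.cast_prod]
  exact prod_congr rfl fun i hi => by
    rw [Nat.cast_sub (by have := mem_range.1 hi; omega)]; push_cast; ring

theorem two_pow_mul_prod_range_two_mul_sub_one_sub (k : ℕ) :
    2 ^ k * ∏ i ∈ range k, ((2 * k : ℤ) - 1 - 2 * i) = k ! * k.centralBinom := by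
  induction k with
  | zero => simp
  | succ k ih =>
    have hcb : ((k + 1 : ℕ) : ℤ) * (k + 1).centralBinom = 2 * (2 * k + 1) * k.centralBinom := by
      exact_mod_cast Nat.succ_mul_centralBinom_succ k
    rw [prod_range_succ', prod_congr rfl fun i _ => show
      ((2 * (k + 1 : ℕ) : ℤ) - 1 - 2 * (i + 1 : ℕ)) = (2 * k : ℤ) - 1 - 2 * i by
        push_cast; ring, Nat.factorial_succ]
    push_cast at hcb ⊢
    linear_combination 2 * (2 * (k : ℤ) + 1) * ih - (k ! : ℤ) * hcb

/-- Both `∏ (p - i)` and `2 ^ k * ∏ (p - 2i)` (over `1 ≤ i ≤ k`) equal `k! * C(2k, k)`; expanding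
them to first order in `p` and eliminating the common first-order term `p * e_{k-1}(1, …, k)`
leaves a relation between `C(2k, k)` and `4 ^ k` alone. -/
theorem two_mul_neg_one_pow_mul_centralBinom {p k : ℕ} (hp : p.Prime) (hpk : p = 2 * k + 1) :
    (2 : ZMod (p ^ 2)) * ((-1) ^ k * k.centralBinom) =
      4 ^ k * (1 + (-1) ^ k * k.centralBinom) := by
  have hk : k ≠ 0 := by have := hp.two_le; omega
  have hK : IsUnit ((k ! : ℕ) : ZMod (p ^ 2)) := by
    rw [ZMod.isUnit_iff_coprime]
    exact Nat.Coprime.pow_right 2 ((hp.coprime_iff_not_dvd.2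
      (by rw [hp.dvd_factorial]; omega)).symm)
  set π : ZMod (p ^ 2) := (p : ZMod (p ^ 2))
  have hπ : π ^ 2 = 0 := by rw [← Nat.cast_pow, ZMod.natCast_self]
  have hπk : π = 2 * k + 1 := by simp only [π, hpk]; push_cast; ring
  set K : ZMod (p ^ 2) := ((k ! : ℕ) : ZMod (p ^ 2))
  set E := ∑ i ∈ range k, ∏ j ∈ (range k).erase i, ((j : ZMod (p ^ 2)) + 1)
  have hA : K * ((-1) ^ k * k.centralBinom) = K - π * E := by
    have h := prod_range_mul_add_one_sub_of_sq_eq_zero hπ 1 k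
    have hI := congrArg (Int.cast : ℤ → ZMod (p ^ 2)) (prod_range_two_mul_sub k)
    push_cast at hI
    rw [prod_congr rfl fun (i : ℕ) _ => show
      1 * ((i : ZMod (p ^ 2)) + 1) - π = -1 * (2 * k - i) by rw [hπk]; ring,
      prod_mul_distrib, prod_const, card_range, hI] at h
    linear_combination h
  have hB : K * ((-1) ^ k * k.centralBinom) = 2 ^ k * (2 ^ k * K - π * 2 ^ (k - 1) * E) := by
    have h := prod_range_mul_add_one_sub_of_sq_eq_zero hπ 2 k
    have hI := congrArg (Int.cast : ℤ → ZMod (p ^ 2))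
      (two_pow_mul_prod_range_two_mul_sub_one_sub k)
    push_cast at hI
    rw [prod_congr rfl fun (i : ℕ) _ => show
      2 * ((i : ZMod (p ^ 2)) + 1) - π = -1 * (2 * k - 1 - 2 * i) by rw [hπk]; ring,
      prod_mul_distrib, prod_const, card_range] at h
    linear_combination 2 ^ k * h - (-1) ^ k * hI
  obtain ⟨m, rfl⟩ : ∃ m, k = m + 1 := ⟨k - 1, by omega⟩
  rw [Nat.add_sub_cancel] at hB
  have h4 : (4 : ZMod (p ^ 2)) ^ m = 2 ^ m * 2 ^ m := by rw [← mul_pow]; norm_num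
  exact hK.mul_left_cancel
    (by linear_combination 2 * hB - 4 ^ (m + 1) * hA - 4 * (2 * K - π * E) * h4)

theorem neg_one_pow_mul_centralBinom_modEq {p k : ℕ} (hp : p.Prime) (hpk : p = 2 * k + 1) :
    (-1) ^ k * (k.centralBinom : ℤ) ≡ 4 ^ (p - 1) [ZMOD (p : ℤ) ^ 2] := by
  obtain ⟨b, hb⟩ : (p : ℤ) ∣ 4 ^ k - 1 := by
    have h2p : IsCoprime (2 : ℤ) p := Nat.isCoprime_iff_coprime.2
      ((Nat.coprime_primes Nat.prime_two hp).2 (by omega))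
    have := (Int.ModEq.pow_card_sub_one_eq_one hp h2p).symm.dvd
    rwa [show p - 1 = 2 * k by omega, pow_mul, show (2 : ℤ) ^ 2 = 4 by norm_num] at this
  have hw : (4 : ZMod (p ^ 2)) ^ k = 1 + p * b := by
    rw [← sub_eq_iff_eq_add']; exact_mod_cast congrArg (Int.cast : ℤ → ZMod (p ^ 2)) hb
  have hπ : (p : ZMod (p ^ 2)) ^ 2 = 0 := by rw [← Nat.cast_pow, ZMod.natCast_self]
  have hu := two_mul_neg_one_pow_mul_centralBinom hp hpk
  rw [← Nat.cast_pow, ← ZMod.intCast_eq_intCast_iff, show p - 1 = 2 * k by omega]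
  push_cast
  set u : ZMod (p ^ 2) := (-1) ^ k * k.centralBinom
  linear_combination (1 + p * b) * hu + ((1 + p * b) * u - 4 ^ k) * hw + b ^ 2 * u * hπ

theorem neg_one_pow_mul_choose_modEq {p k : ℕ} (hp : p.Prime) (hpk : p = 2 * k + 1) :
    (-1) ^ k * (p.choose k : ℤ) ≡ 2 * p * (1 - p) * 4 ^ (p - 1) [ZMOD (p : ℤ) ^ 3] := by
  obtain ⟨t, ht⟩ := (neg_one_pow_mul_centralBinom_modEq hp hpk).symm.dvd
  obtain ⟨q, hq⟩ := hp.dvd_choose_self (k := k) (by have := hp.two_le; omega) (by omega)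
  have hrel : ((p + 1) * p.choose k : ℤ) = 2 * p * k.centralBinom := by
    have h := Nat.add_one_mul_choose_eq (2 * k) k
    rw [Nat.choose_symm_half, ← hpk, ← Nat.centralBinom_eq_two_mul_choose] at h
    have h' : ((p * k.centralBinom : ℕ) : ℤ) = ((p.choose k * (k + 1) : ℕ) : ℤ) := congrArg _ h
    push_cast [hpk] at h' ⊢
    linear_combination -2 * h'
  have hq' : (p.choose k : ℤ) = p * q := by exact_mod_cast hq
  refine Int.modEq_iff_dvd.2 ⟨-(-1) ^ k * q - 2 * (1 - p) * t, ?_⟩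
  linear_combination -(-1) ^ k * (1 - (p : ℤ)) * hrel - 2 * p * (1 - (p : ℤ)) * ht
    - (-1) ^ k * (p : ℤ) ^ 2 * hq'

theorem v_mod_p5 (p : ℕ) (hp : p.Prime) (hp5 : 5 ≤ p) :
    v ((p + 3) / 2) ≡
      2 * (p : ℤ) ^ 3 * (1 - (p : ℤ)) * ((p - 1).factorial : ℤ) * 4 ^ (p - 1)
      [ZMOD (p : ℤ) ^ 5] := by
  obtain ⟨k, hpk⟩ := hp.odd_of_ne_two (by omega)
  have hcoeff := coeff_pairedProduct_modEq hp hpk hp5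
  have hchoose := neg_one_pow_mul_choose_modEq hp hpk
  have key := (hcoeff.trans (hchoose.mul_left _)).mul_left' (c := (p : ℤ) ^ 2)
  rw [← pow_add] at key
  rw [show (p + 3) / 2 = k + 2 by omega, v_add_two, show p - 1 = 2 * k by omega]
  convert key using 1 <;> push_cast [hpk] <;> ring
end

section
/- For every q ≥ 1 and every odd integer j, ∏_{i=0}^{2^q - 1}(i·x - i + j)^2 ≡ x^{2^q} (mod 2^q) as polynomials with integer coefficients. -/
open Polynomial Finset

/-- Product-wise congruence: if each factor difference is divisible by `d`,
so is the difference of the products. -/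
lemma dvd_prod_sub_prod {ι R : Type*} [CommRing R] {d : R} {s : Finset ι} {f g : ι → R}
    (h : ∀ i ∈ s, d ∣ f i - g i) : d ∣ (∏ i ∈ s, f i) - ∏ i ∈ s, g i := by
  classical
  induction s using Finset.induction with
  | empty => simp
  | @insert a s ha ih =>
      rw [Finset.prod_insert ha, Finset.prod_insert ha]
      have h1 : d ∣ f a - g a := h a (Finset.mem_insert_self a s)
      have h2 : d ∣ (∏ i ∈ s, f i) - ∏ i ∈ s, g i :=
        ih fun i hi => h i (Finset.mem_insert_of_mem hi)
      have : f a * ∏ i ∈ s, f i - g a * ∏ i ∈ s, g i =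
          f a * ((∏ i ∈ s, f i) - ∏ i ∈ s, g i) + (f a - g a) * ∏ i ∈ s, g i := by ring
      rw [this]
      exact dvd_add (Dvd.dvd.mul_left h2 _) (Dvd.dvd.mul_right h1 _)

/-- Squaring lifts a congruence mod `2^k` to one mod `2^(k+1)`. -/
lemma sq_sub_sq_dvd {R : Type*} [CommRing R] {a b : R} {k : ℕ} (hk : 1 ≤ k)
    (h : (2 : R) ^ k ∣ a - b) : (2 : R) ^ (k + 1) ∣ a ^ 2 - b ^ 2 := by
  have h2 : (2 : R) ∣ a + b := by
    have h' : (2 : R) ∣ a - b := dvd_trans (dvd_pow_self 2 (by omega)) h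
    obtain ⟨c, hc⟩ := h'
    exact ⟨c + b, by linear_combination hc⟩
  have : a ^ 2 - b ^ 2 = (a - b) * (a + b) := by ring
  rw [this, pow_succ]
  exact mul_dvd_mul h h2

lemma pow_two_pow_dvd {R : Type*} [CommRing R] {a b : R} (h : (2 : R) ∣ a - b) :
    ∀ m : ℕ, (2 : R) ^ (m + 1) ∣ a ^ (2 ^ m) - b ^ (2 ^ m) := by
  intro m
  induction m with
  | zero => simpa using h
  | succ m ih =>
      have := sq_sub_sq_dvd (Nat.succ_le_succ (Nat.zero_le m)) ih
      have e : ∀ c : R, c ^ (2 ^ (m + 1)) = (c ^ (2 ^ m)) ^ 2 := fun c => by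
        rw [← pow_mul, pow_succ]
      rw [e a, e b]
      exact this

/-- The key 2-adic congruence in `ℤ[X]`. -/
lemma key_dvd_s16 (j : ℤ) (hj : Odd j) : ∀ q : ℕ,
    (2 : ℤ[X]) ^ (q + 1) ∣
      (∏ i ∈ Finset.range (2 ^ (q + 1)),
        (C (j ^ 2) - C ((i : ℤ) ^ 2) * (X - 1) ^ 2)) -
      (C (j ^ 2) - (X - 1) ^ 2) ^ (2 ^ q) := by
  intro q
  induction q with
  | zero =>
      obtain ⟨k, hk⟩ := hj
      subst hk
      refine ⟨C (2 * k ^ 2 + 2 * k) * (C ((2 * k + 1) ^ 2) - (X - 1) ^ 2), ?_⟩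
      rw [show (2 : ℕ) ^ (0 + 1) = 2 by norm_num, show (2 : ℕ) ^ (0 : ℕ) = 1 by norm_num]
      rw [Finset.prod_range_succ, Finset.prod_range_one, pow_one, pow_one]
      push_cast [map_add, map_mul, map_pow, map_ofNat, map_one, map_zero]
      ring
  | succ q ih =>
      set T : ℤ[X] := C (j ^ 2) - (X - 1) ^ 2 with hT
      set g : ℕ → ℤ[X] := fun i => C (j ^ 2) - C ((i : ℤ) ^ 2) * (X - 1) ^ 2 with hg
      have hsplit : ∏ i ∈ Finset.range (2 ^ (q + 2)), g i =
          (∏ i ∈ Finset.range (2 ^ (q + 1)), g i) *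
            ∏ i ∈ Finset.range (2 ^ (q + 1)), g (2 ^ (q + 1) + i) := by
        rw [show 2 ^ (q + 2) = 2 ^ (q + 1) + 2 ^ (q + 1) by ring, Finset.prod_range_add]
      have h1 : (2 : ℤ[X]) ^ (q + 2) ∣
          (∏ i ∈ Finset.range (2 ^ (q + 1)), g (2 ^ (q + 1) + i)) -
            ∏ i ∈ Finset.range (2 ^ (q + 1)), g i := by
        refine dvd_prod_sub_prod fun i _ => ?_
        refine ⟨-(C ((2 : ℤ) ^ q + (i : ℤ)) * (X - 1) ^ 2), ?_⟩
        simp only [hg]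
        push_cast [map_add, map_mul, map_pow, map_ofNat, map_one, map_zero]
        ring
      have h2 : (2 : ℤ[X]) ^ (q + 2) ∣
          (∏ i ∈ Finset.range (2 ^ (q + 1)), g i) ^ 2 - (T ^ (2 ^ q)) ^ 2 :=
        sq_sub_sq_dvd (by omega) ih
      have hTe : T ^ 2 ^ (q + 1) = (T ^ 2 ^ q) ^ 2 := by rw [← pow_mul, pow_succ]
      have hexpand :
          (∏ i ∈ Finset.range (2 ^ (q + 2)), g i) - T ^ 2 ^ (q + 1) =
          (∏ i ∈ Finset.range (2 ^ (q + 1)), g i) *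
              ((∏ i ∈ Finset.range (2 ^ (q + 1)), g (2 ^ (q + 1) + i)) -
                ∏ i ∈ Finset.range (2 ^ (q + 1)), g i) +
            ((∏ i ∈ Finset.range (2 ^ (q + 1)), g i) ^ 2 - (T ^ (2 ^ q)) ^ 2) := by
        rw [hsplit, hTe]; ring
      rw [hexpand]
      exact dvd_add (Dvd.dvd.mul_left h1 _) h2

lemma prod_range_zmod {n : ℕ} [NeZero n] {M : Type*} [CommMonoid M] (f : ZMod n → M) :
    ∏ i ∈ Finset.range n, f (i : ZMod n) = ∏ a : ZMod n, f a := by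
  refine Finset.prod_bij' (fun i _ => (i : ZMod n)) (fun a _ => a.val) ?_ ?_ ?_ ?_ ?_
  · intro i _; exact Finset.mem_univ _
  · intro a _; exact Finset.mem_range.mpr (ZMod.val_lt a)
  · intro i hi; exact ZMod.val_cast_of_lt (Finset.mem_range.mp hi)
  · intro a _; exact ZMod.natCast_rightInverse a
  · intro i _; rfl

theorem prod_sq_mod_two_pow (q : ℕ) (hq : 1 ≤ q) (j : ℤ) (hj : Odd j) :
    (∏ i ∈ Finset.range (2 ^ q),
        (C (i : ℤ) * X - C (i : ℤ) + C j) ^ 2).map (Int.castRingHom (ZMod (2 ^ q))) =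
    X ^ (2 ^ q) := by
  obtain ⟨m, rfl⟩ : ∃ m, q = m + 1 := ⟨q - 1, by omega⟩
  set n := 2 ^ (m + 1) with hn
  haveI : NeZero n := ⟨by positivity⟩
  -- Integer-side congruence
  have hTX : (2 : ℤ[X]) ∣ (C (j ^ 2) - (X - 1) ^ 2) - X ^ 2 := by
    obtain ⟨k, hk⟩ := hj
    refine ⟨C (2 * k ^ 2 + 2 * k) - X ^ 2 + X, ?_⟩
    subst hk
    push_cast [map_add, map_mul, map_pow, map_ofNat, map_one, map_zero]
    ring
  have h2 := pow_two_pow_dvd hTX m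
  have h1 := key_dvd_s16 j hj m
  have hdvd : (2 : ℤ[X]) ^ (m + 1) ∣
      (∏ i ∈ Finset.range n, (C (j ^ 2) - C ((i : ℤ) ^ 2) * (X - 1) ^ 2)) - X ^ n := by
    have e : (X : ℤ[X]) ^ n = ((X : ℤ[X]) ^ 2) ^ (2 ^ m) := by
      rw [← pow_mul]
      congr 1
      rw [hn]; ring
    have e2 : (∏ i ∈ Finset.range n, (C (j ^ 2) - C ((i : ℤ) ^ 2) * (X - 1) ^ 2)) - X ^ n =
        ((∏ i ∈ Finset.range n, (C (j ^ 2) - C ((i : ℤ) ^ 2) * (X - 1) ^ 2)) -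
            (C (j ^ 2) - (X - 1) ^ 2) ^ 2 ^ m) +
          ((C (j ^ 2) - (X - 1) ^ 2) ^ 2 ^ m - ((X : ℤ[X]) ^ 2) ^ 2 ^ m) := by
      rw [e]; ring
    rw [e2]
    exact dvd_add h1 h2
  obtain ⟨w, hw⟩ := hdvd
  have hProdInt : (∏ i ∈ Finset.range n, (C (j ^ 2) - C ((i : ℤ) ^ 2) * (X - 1) ^ 2)) =
      X ^ n + 2 ^ (m + 1) * w := by linear_combination hw
  -- ZMod side
  set jb : ZMod n := ((j : ℤ) : ZMod n) with hjb
  set F : ZMod n → (ZMod n)[X] := fun a => C a * X - C a + C jb with hF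
  calc (∏ i ∈ Finset.range n,
        (C (i : ℤ) * X - C (i : ℤ) + C j) ^ 2).map (Int.castRingHom (ZMod n))
      = ∏ i ∈ Finset.range n, (F ((i : ℕ) : ZMod n)) ^ 2 := by
        rw [Polynomial.map_prod]
        refine Finset.prod_congr rfl fun i _ => ?_
        simp only [Polynomial.map_pow, Polynomial.map_add, Polynomial.map_sub,
          Polynomial.map_mul, Polynomial.map_C, Polynomial.map_X, hF, hjb,
          Int.coe_castRingHom]
        push_cast
        ring
    _ = ∏ a : ZMod n, (F a) ^ 2 := prod_range_zmod fun a => (F a) ^ 2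
    _ = (∏ a : ZMod n, F a) * ∏ a : ZMod n, F (-a) := by
        rw [(Fintype.prod_equiv (Equiv.neg (ZMod n)) (fun a => F (-a)) F fun a => rfl :
            ∏ a : ZMod n, F (-a) = ∏ a : ZMod n, F a),
          ← Finset.prod_mul_distrib]
        exact Finset.prod_congr rfl fun a _ => sq (F a)
    _ = ∏ a : ZMod n, (C (jb ^ 2) - C (a ^ 2) * (X - 1) ^ 2) := by
        rw [← Finset.prod_mul_distrib]
        refine Finset.prod_congr rfl fun a _ => ?_
        simp only [hF, map_neg, map_pow]
        ring
    _ = ∏ i ∈ Finset.range n, (C (jb ^ 2) - C (((i : ℕ) : ZMod n) ^ 2) * (X - 1) ^ 2) :=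
        (prod_range_zmod fun a => C (jb ^ 2) - C (a ^ 2) * (X - 1) ^ 2).symm
    _ = (∏ i ∈ Finset.range n,
          (C (j ^ 2) - C ((i : ℤ) ^ 2) * (X - 1) ^ 2)).map (Int.castRingHom (ZMod n)) := by
        rw [Polynomial.map_prod]
        refine Finset.prod_congr rfl fun i _ => ?_
        simp only [Polynomial.map_sub, Polynomial.map_mul, Polynomial.map_pow,
          Polynomial.map_C, Polynomial.map_X, Polynomial.map_one, hjb,
          Int.coe_castRingHom]
        push_cast
        ring
    _ = X ^ n := by
        rw [hProdInt]
        have h20 : ((2 : (ZMod n)[X]) ^ (m + 1)) = 0 := by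
          have h2R : ((2 : ZMod n) ^ (m + 1)) = 0 := by
            have hn0 : ((n : ℕ) : ZMod n) = 0 := ZMod.natCast_self n
            rw [hn] at hn0
            push_cast at hn0
            exact hn0
          rw [← map_ofNat C 2, ← map_pow, h2R, map_zero]
        simp only [Polynomial.map_add, Polynomial.map_mul, Polynomial.map_pow,
          Polynomial.map_X, Polynomial.map_ofNat]
        rw [h20, zero_mul, add_zero]
end
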